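/- arXiv:0808.0180 — 5 statements merged into one kernel-verified Lean document; each statement's English description precedes it below -/
import Mathlib

section
/- Let n ≥ 2 be an integer. For every function f in the complex linear span of {e_j : j ∈ Λ_{2n−1}^{†*}}, both cubature formulas hold: ∫_{[−1/2,1/2]³} f(x) dx = (1/(2n³)) · Σ_{k ∈ X_n^*} c_k · f(k/(2n)) and ∫_{[−1/2,1/2]³} f(x) dx = (1/(2n³)) · Σ_{k ∈ X_n} f(k/(2n)). -/
open MeasureTheory Complex

attribute [local instance] Classical.propDecidable

/-- The exponential e_k(x) = exp(2 pi i (k1 x1 + k2 x2 + k3 x3)). -/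
noncomputable def e3 (k : ℤ × ℤ × ℤ) (x : ℝ × ℝ × ℝ) : ℂ :=
  Complex.exp (2 * Real.pi * Complex.I *
    ((k.1 : ℂ) * x.1 + (k.2.1 : ℂ) * x.2.1 + (k.2.2 : ℂ) * x.2.2))

/-- The point k/(2n) in three-space. -/
noncomputable def pt3 (n : ℕ) (k : ℤ × ℤ × ℤ) : ℝ × ℝ × ℝ :=
  ((k.1 : ℝ) / (2 * n), (k.2.1 : ℝ) / (2 * n), (k.2.2 : ℝ) / (2 * n))

/-- The cube of integer points with coordinates in [-m, m]. -/
noncomputable def box3 (m : ℕ) : Finset (ℤ × ℤ × ℤ) :=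
  Finset.Icc (-(m : ℤ), -(m : ℤ), -(m : ℤ)) ((m : ℤ), (m : ℤ), (m : ℤ))

/-- Λ_m^{†*} = {k : |k_ν + k_μ| ≤ m and |k_ν - k_μ| ≤ m for all ν < μ}. -/
noncomputable def LamDagStar (m : ℕ) : Finset (ℤ × ℤ × ℤ) :=
  (box3 m).filter fun k =>
    |k.1 + k.2.1| ≤ (m : ℤ) ∧ |k.1 - k.2.1| ≤ (m : ℤ) ∧
    |k.1 + k.2.2| ≤ (m : ℤ) ∧ |k.1 - k.2.2| ≤ (m : ℤ) ∧
    |k.2.1 + k.2.2| ≤ (m : ℤ) ∧ |k.2.1 - k.2.2| ≤ (m : ℤ)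

/-- X_n = {k : k1 ≡ k2 ≡ k3 (mod 2), -n ≤ k_i < n}. -/
noncomputable def X3 (n : ℕ) : Finset (ℤ × ℤ × ℤ) :=
  (box3 n).filter fun k =>
    k.1 % 2 = k.2.1 % 2 ∧ k.2.1 % 2 = k.2.2 % 2 ∧
    k.1 < (n : ℤ) ∧ k.2.1 < (n : ℤ) ∧ k.2.2 < (n : ℤ)

/-- X_n^* = {k : k1 ≡ k2 ≡ k3 (mod 2), |k_i| ≤ n}. -/
noncomputable def X3star (n : ℕ) : Finset (ℤ × ℤ × ℤ) :=
  (box3 n).filter fun k => k.1 % 2 = k.2.1 % 2 ∧ k.2.1 % 2 = k.2.2 % 2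

/-- The weight c_k = 2^{-m}, m = #{i : |k_i| = n}. -/
noncomputable def c3 (n : ℕ) (k : ℤ × ℤ × ℤ) : ℝ :=
  (1 / 2) ^ ((if |k.1| = (n : ℤ) then 1 else 0)
    + (if |k.2.1| = (n : ℤ) then 1 else 0)
    + (if |k.2.2| = (n : ℤ) then 1 else 0) : ℕ)

/-!
Both rules are linear in `f`, so it suffices to check them on `e_j` for `j ∈ Λ_{2n-1}^{†*}`, whose
integral over the cube is `[j = 0]`. With `ζ = exp(2πi/(2n))` we have `e_j(k/(2n)) = ζ ^ (j ⬝ k)`.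
The indicator of `k₁ ≡ k₂ ≡ k₃ (mod 2)` is `¼ (1 + (-1)^(k₁+k₂) + (-1)^(k₂+k₃) + (-1)^(k₁+k₃))` and
`(-1)^t = ζ^(n t)`, so each lattice sum splits into four products of one-dimensional sums
`∑_t w(t) ζ^(a t)`. These equal `2n · [2n ∣ a]`, both for unit weights on `[-n, n)` and for the
weights halved at `±n` on `[-n, n]`. For `j ∈ Λ_{2n-1}^{†*}` only the untwisted product survives,
and only at `j = 0`: a twisted product needs two coordinates with `|j_ν| = |j_μ| = n`, which forces
`|j_ν + j_μ| = 2n` or `|j_ν - j_μ| = 2n`.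
-/

open Finset

theorem Finset.sum_product_mul_mul {R α β γ : Type*} [CommSemiring R] (s : Finset α)
    (t : Finset β) (u : Finset γ) (f : α → R) (g : β → R) (h : γ → R) :
    ∑ k ∈ s ×ˢ t ×ˢ u, f k.1 * g k.2.1 * h k.2.2 =
      (∑ a ∈ s, f a) * (∑ b ∈ t, g b) * (∑ c ∈ u, h c) := by
  rw [sum_product, sum_mul_sum, sum_mul]
  simp_rw [sum_product, sum_mul_sum]

def sameParityCube (B : Finset ℤ) : Finset (ℤ × ℤ × ℤ) :=
  (B ×ˢ B ×ˢ B).filter fun k => k.1 % 2 = k.2.1 % 2 ∧ k.2.1 % 2 = k.2.2 % 2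

section Divisibility

variable {n a b : ℤ}

theorem abs_eq_of_two_mul_dvd_add (ha : |a| < 2 * n) (h : 2 * n ∣ a + n) : |a| = n := by
  rw [abs_lt] at ha
  rcases le_or_gt 0 a with ha0 | ha0
  · have := Int.eq_zero_of_abs_lt_dvd (dvd_sub h (dvd_refl _)) (by rw [abs_lt]; omega)
    rw [abs_of_nonneg ha0]; omega
  · have := Int.eq_zero_of_abs_lt_dvd h (by rw [abs_lt]; omega)
    rw [abs_of_neg ha0]; omega

theorem not_two_mul_dvd_add_and_dvd_add (hn : 0 < n) (hab : |a + b| < 2 * n)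
    (hab' : |a - b| < 2 * n) : ¬ (2 * n ∣ a + n ∧ 2 * n ∣ b + n) := by
  rintro ⟨ha, hb⟩
  have ha' := abs_eq_of_two_mul_dvd_add (by rw [abs_lt] at *; omega) ha
  have hb' := abs_eq_of_two_mul_dvd_add (by rw [abs_lt] at *; omega) hb
  rw [abs_lt] at hab hab'
  rw [abs_eq hn.le] at ha' hb'
  omega

end Divisibility

section Field

variable {K : Type*} [Field K] {ζ : K} {n : ℕ}

theorem IsPrimitiveRoot.sum_Ico_zpow_mul {m : ℕ} (hζ : IsPrimitiveRoot ζ m) (s a : ℤ) :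
    ∑ t ∈ Ico s (s + m), ζ ^ (a * t) = if (m : ℤ) ∣ a then (m : K) else 0 := by
  obtain rfl | hm := eq_or_ne m 0
  · simp
  set z := ζ ^ a
  have hz0 : z ≠ 0 := zpow_ne_zero _ (hζ.ne_zero hm)
  have hsum : ∑ t ∈ Ico s (s + m), ζ ^ (a * t) = z ^ s * ∑ i ∈ range m, z ^ i := by
    simp [Int.Ico_eq_finset_map, mul_sum, zpow_mul, zpow_add₀ hz0, z]
  rw [hsum]
  split_ifs with hdvd
  · simp [z, (hζ.zpow_eq_one_iff_dvd a).mpr hdvd]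
  · have hz1 : z ≠ 1 := fun h => hdvd ((hζ.zpow_eq_one_iff_dvd a).mp h)
    have hzm : z ^ m = 1 := by
      rw [← zpow_natCast, ← zpow_mul, mul_comm, zpow_mul, zpow_natCast, hζ.pow_eq_one, one_zpow]
    rw [geom_sum_eq hz1, hzm, sub_self, zero_div, mul_zero]

theorem IsPrimitiveRoot.zpow_mul_eq_neg_one_zpow (hζ : IsPrimitiveRoot ζ (2 * n)) (hn : n ≠ 0)
    (t : ℤ) : ζ ^ (n * t) = (-1) ^ t := by
  have hhalf : ζ ^ n = -1 := by
    have := hζ.pow_of_dvd hn (dvd_mul_left n 2)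
    rw [Nat.mul_div_cancel _ (Nat.pos_of_ne_zero hn)] at this
    exact this.eq_neg_one_of_two_right
  rw [zpow_mul, zpow_natCast, hhalf]

theorem IsPrimitiveRoot.two_ne_zero (hζ : IsPrimitiveRoot ζ (2 * n)) (hn : n ≠ 0) :
    (2 : K) ≠ 0 := by
  have : NeZero (2 * n) := ⟨by omega⟩
  intro h
  simpa [h] using hζ.neZero'.out

def endpointWeight (n : ℕ) (t : ℤ) : K := if |t| = n then 1 / 2 else 1

theorem sum_Icc_endpointWeight_mul [NeZero (2 : K)] (hn : n ≠ 0) (g : ℤ → K)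
    (hg : g (-n) = g n) :
    ∑ t ∈ Icc (-n : ℤ) n, endpointWeight n t * g t = ∑ t ∈ Ico (-n : ℤ) n, g t := by
  have hn' : (0 : ℤ) < n := by omega
  have hn_abs : |(n : ℤ)| = n := abs_of_pos hn'
  have hnegn_abs : |(-n : ℤ)| = n := by rw [abs_neg, hn_abs]
  have hinner : ∀ t ∈ Ioo (-n : ℤ) n, endpointWeight n t * g t = g t := by
    intro t ht
    rw [mem_Ioo] at ht
    rw [endpointWeight, if_neg (by rw [abs_eq hn'.le]; omega), one_mul]
  rw [← Ico_insert_right (by omega), ← Ioo_insert_left (by omega),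
    sum_insert (by simp [hn]), sum_insert (by simp), sum_insert (by simp), sum_congr rfl hinner,
    endpointWeight, endpointWeight, if_pos hn_abs, if_pos hnegn_abs, hg, ← add_assoc, ← add_mul,
    add_halves, one_mul]

theorem parity_indicator (a b c : ℤ) :
    (if a % 2 = b % 2 ∧ b % 2 = c % 2 then (4 : K) else 0) =
      1 + (-1) ^ a * (-1) ^ b + (-1) ^ b * (-1) ^ c + (-1) ^ a * (-1) ^ c := by
  rcases Int.even_or_odd a with ha | ha <;> rcases Int.even_or_odd b with hb | hb <;>
    rcases Int.even_or_odd c with hc | hc <;>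
    simp only [ha.neg_one_zpow, hb.neg_one_zpow, hc.neg_one_zpow] <;>
    simp only [Int.even_iff, Int.odd_iff] at ha hb hc <;> simp [ha, hb, hc] <;> norm_num

theorem four_mul_sum_sameParityCube (B : Finset ℤ) (g₁ g₂ g₃ : ℤ → K) :
    4 * ∑ k ∈ sameParityCube B, g₁ k.1 * g₂ k.2.1 * g₃ k.2.2 =
      (∑ t ∈ B, g₁ t) * (∑ t ∈ B, g₂ t) * (∑ t ∈ B, g₃ t) +
      (∑ t ∈ B, (-1) ^ t * g₁ t) * (∑ t ∈ B, (-1) ^ t * g₂ t) * (∑ t ∈ B, g₃ t) +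
      (∑ t ∈ B, g₁ t) * (∑ t ∈ B, (-1) ^ t * g₂ t) * (∑ t ∈ B, (-1) ^ t * g₃ t) +
      (∑ t ∈ B, (-1) ^ t * g₁ t) * (∑ t ∈ B, g₂ t) * (∑ t ∈ B, (-1) ^ t * g₃ t) := by
  simp only [← sum_product_mul_mul B B B]
  rw [← sum_add_distrib, ← sum_add_distrib, ← sum_add_distrib, sameParityCube, sum_filter, mul_sum]
  refine sum_congr rfl fun k _ => ?_
  have := parity_indicator (K := K) k.1 k.2.1 k.2.2
  split_ifs at this ⊢ <;> linear_combination (g₁ k.1 * g₂ k.2.1 * g₃ k.2.2) * this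

def weightedRootSum (B : Finset ℤ) (w : ℤ → K) (ζ : K) (a : ℤ) : K :=
  ∑ t ∈ B, w t * ζ ^ (a * t)

theorem weightedRootSum_Ico_one (hζ : IsPrimitiveRoot ζ (2 * n)) (a : ℤ) :
    weightedRootSum (Ico (-n : ℤ) n) 1 ζ a = if 2 * (n : ℤ) ∣ a then 2 * (n : K) else 0 := by
  have := hζ.sum_Ico_zpow_mul (-n) a
  push_cast at this
  rw [show -(n : ℤ) + 2 * n = n by ring] at this
  simpa [weightedRootSum] using this

theorem weightedRootSum_Icc_endpointWeight (hζ : IsPrimitiveRoot ζ (2 * n)) (hn : n ≠ 0)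
    (a : ℤ) :
    weightedRootSum (Icc (-n : ℤ) n) (endpointWeight n) ζ a =
      if 2 * (n : ℤ) ∣ a then 2 * (n : K) else 0 := by
  have : NeZero (2 : K) := ⟨hζ.two_ne_zero hn⟩
  have hζ0 : ζ ≠ 0 := hζ.ne_zero (by omega)
  have hsym : ζ ^ (a * -n) = ζ ^ (a * n) := by
    have h1 : ζ ^ (a * n - a * -n) = 1 := (hζ.zpow_eq_one_iff_dvd _).mpr ⟨a, by push_cast; ring⟩
    rw [zpow_sub₀ hζ0, div_eq_one_iff_eq (zpow_ne_zero _ hζ0)] at h1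
    exact h1.symm
  rw [← weightedRootSum_Ico_one hζ, weightedRootSum, weightedRootSum,
    sum_Icc_endpointWeight_mul hn (fun t => ζ ^ (a * t)) hsym]
  simp

theorem four_mul_sum_sameParityCube_zpow (hζ : IsPrimitiveRoot ζ (2 * n)) (hn : n ≠ 0)
    (B : Finset ℤ) (w : ℤ → K) (j : ℤ × ℤ × ℤ) :
    let T := weightedRootSum B w ζ
    4 * ∑ k ∈ sameParityCube B,
        w k.1 * w k.2.1 * w k.2.2 * ζ ^ (j.1 * k.1 + j.2.1 * k.2.1 + j.2.2 * k.2.2) =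
      T j.1 * T j.2.1 * T j.2.2 + T (j.1 + n) * T (j.2.1 + n) * T j.2.2 +
        T j.1 * T (j.2.1 + n) * T (j.2.2 + n) + T (j.1 + n) * T j.2.1 * T (j.2.2 + n) := by
  have hζ0 : ζ ≠ 0 := hζ.ne_zero (by omega)
  have hsplit : ∀ k : ℤ × ℤ × ℤ,
      w k.1 * w k.2.1 * w k.2.2 * ζ ^ (j.1 * k.1 + j.2.1 * k.2.1 + j.2.2 * k.2.2) =
        w k.1 * ζ ^ (j.1 * k.1) * (w k.2.1 * ζ ^ (j.2.1 * k.2.1)) *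
          (w k.2.2 * ζ ^ (j.2.2 * k.2.2)) := by
    intro k
    rw [zpow_add₀ hζ0, zpow_add₀ hζ0]
    ring
  have htwist : ∀ a t : ℤ, (-1) ^ t * (w t * ζ ^ (a * t)) = w t * ζ ^ ((a + n) * t) := by
    intro a t
    rw [add_mul, zpow_add₀ hζ0, hζ.zpow_mul_eq_neg_one_zpow hn]
    ring
  have h4 := four_mul_sum_sameParityCube B (fun t => w t * ζ ^ (j.1 * t))
    (fun t => w t * ζ ^ (j.2.1 * t)) (fun t => w t * ζ ^ (j.2.2 * t))
  simp only [htwist] at h4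
  simpa only [hsplit, weightedRootSum] using h4

theorem sum_twisted_products_eq_of_mem_LamDagStar {m : ℕ} (hm : m < 2 * n)
    {j : ℤ × ℤ × ℤ} (hj : j ∈ LamDagStar m) (T : ℤ → K) (c : K)
    (hT : ∀ a, T a = if 2 * (n : ℤ) ∣ a then c else 0) :
    T j.1 * T j.2.1 * T j.2.2 + T (j.1 + n) * T (j.2.1 + n) * T j.2.2 +
        T j.1 * T (j.2.1 + n) * T (j.2.2 + n) + T (j.1 + n) * T j.2.1 * T (j.2.2 + n) =
      if j = 0 then c ^ 3 else 0 := by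
  obtain ⟨a, b, d⟩ := j
  simp only [LamDagStar, box3, mem_filter, mem_Icc, Prod.mk_le_mk] at hj
  obtain ⟨⟨⟨ha₁, hb₁, hd₁⟩, ha₂, hb₂, hd₂⟩, hab, hab', had, had', hbd, hbd'⟩ := hj
  have hm' : (m : ℤ) < 2 * n := by exact_mod_cast hm
  have hzero : ∀ x : ℤ, -m ≤ x → x ≤ m → T x = if x = 0 then c else 0 := by
    intro x h₁ h₂
    have hx : |x| < 2 * n := by rw [abs_lt]; omega
    simp only [hT, show 2 * (n : ℤ) ∣ x ↔ x = 0 from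
      ⟨fun h => Int.eq_zero_of_abs_lt_dvd h hx, by rintro rfl; exact dvd_zero _⟩]
  have hpair : ∀ x y : ℤ, |x + y| ≤ m → |x - y| ≤ m → T (x + n) * T (y + n) = 0 := by
    intro x y h₁ h₂
    rw [abs_le] at h₁ h₂
    rw [hT, hT, ite_zero_mul_ite_zero, if_neg (not_two_mul_dvd_add_and_dvd_add (by omega)
      (by rw [abs_lt]; omega) (by rw [abs_lt]; omega))]
  have hunshifted : T a * T b * T d = if (a, b, d) = 0 then c ^ 3 else 0 := by
    rw [hzero a ha₁ ha₂, hzero b hb₁ hb₂, hzero d hd₁ hd₂]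
    simp only [ite_zero_mul_ite_zero, Prod.mk_eq_zero, and_assoc, pow_three, mul_assoc]
  linear_combination hunshifted + T d * hpair a b hab hab' + T a * hpair b d hbd hbd' +
    T b * hpair a d had had'

theorem sum_sameParityCube_zpow_of_mem_LamDagStar {m : ℕ} (hζ : IsPrimitiveRoot ζ (2 * n))
    (hm : m < 2 * n) (B : Finset ℤ) (w : ℤ → K)
    (hB : ∀ a, weightedRootSum B w ζ a = if 2 * (n : ℤ) ∣ a then 2 * (n : K) else 0)
    {j : ℤ × ℤ × ℤ} (hj : j ∈ LamDagStar m) :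
    ∑ k ∈ sameParityCube B,
        w k.1 * w k.2.1 * w k.2.2 * ζ ^ (j.1 * k.1 + j.2.1 * k.2.1 + j.2.2 * k.2.2) =
      if j = 0 then 2 * (n : K) ^ 3 else 0 := by
  have hn : n ≠ 0 := by omega
  have h4 := four_mul_sum_sameParityCube_zpow hζ hn B w j
  dsimp only at h4
  rw [sum_twisted_products_eq_of_mem_LamDagStar hm hj _ _ hB] at h4
  have h4_ne : (4 : K) ≠ 0 := by
    rw [show (4 : K) = 2 * 2 by norm_num]
    exact mul_ne_zero (hζ.two_ne_zero hn) (hζ.two_ne_zero hn)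
  rw [← mul_right_inj' h4_ne, h4]
  split_ifs <;> ring

end Field

theorem MeasureTheory.integral_eq_of_mem_span {X 𝕜 E : Type*} [MeasurableSpace X]
    {μ : Measure X} [NontriviallyNormedField 𝕜] [NormedAddCommGroup E] [NormedSpace ℝ E]
    [NormedSpace 𝕜 E] [SMulCommClass ℝ 𝕜 E] {s : Set (X → E)} (Q : (X → E) →ₗ[𝕜] E)
    (hs : ∀ g ∈ s, Integrable g μ ∧ ∫ x, g x ∂μ = Q g) {f : X → E}
    (hf : f ∈ Submodule.span 𝕜 s) :
    ∫ x, f x ∂μ = Q f := by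
  suffices Integrable f μ ∧ ∫ x, f x ∂μ = Q f from this.2
  induction hf using Submodule.span_induction with
  | mem g hg => exact hs g hg
  | zero => simp
  | add g₁ g₂ _ _ h₁ h₂ =>
    exact ⟨h₁.1.add h₂.1, by
      rw [map_add, ← h₁.2, ← h₂.2, ← integral_add h₁.1 h₂.1, Pi.add_def]⟩
  | smul c g _ h => exact ⟨h.1.smul c, by rw [map_smul, ← h.2, ← integral_smul, Pi.smul_def]⟩

section Cube

open Real

variable {n m : ℕ} {j : ℤ × ℤ × ℤ}

theorem continuous_e3 (j : ℤ × ℤ × ℤ) : Continuous (e3 j) := by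
  unfold e3
  fun_prop

theorem setIntegral_Icc_exp_two_pi_I_int_mul (a : ℤ) :
    ∫ x in Set.Icc (-(1 : ℝ) / 2) (1 / 2), cexp (2 * π * I * (a * x)) =
      if a = 0 then 1 else 0 := by
  rw [integral_Icc_eq_integral_Ioc, ← intervalIntegral.integral_of_le (by norm_num)]
  split_ifs with ha
  · simp [ha]
    norm_num
  · have hc : 2 * π * I * a ≠ 0 := by simp [pi_ne_zero, I_ne_zero, ha]
    have hperiod : cexp (2 * π * I * a * ((1 / 2 : ℝ) : ℂ)) =
        cexp (2 * π * I * a * ((-(1 : ℝ) / 2 : ℝ) : ℂ)) := by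
      rw [← mul_one (cexp (_ * ((-(1 : ℝ) / 2 : ℝ) : ℂ))), ← exp_int_mul_two_pi_mul_I a,
        ← Complex.exp_add]
      congr 1
      push_cast
      ring
    simp_rw [← mul_assoc]
    rw [integral_exp_mul_complex hc, hperiod, sub_self, zero_div]

theorem setIntegral_cube_e3 (j : ℤ × ℤ × ℤ) :
    ∫ x in Set.Icc ((-(1 : ℝ) / 2, -(1 : ℝ) / 2, -(1 : ℝ) / 2)) ((1 / 2, 1 / 2, 1 / 2)), e3 j x =
      if j = 0 then 1 else 0 := by
  set φ : ℤ → ℝ → ℂ := fun a y => cexp (2 * π * I * (a * y)) with hφ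
  have hsplit : ∀ x : ℝ × ℝ × ℝ, e3 j x = φ j.1 x.1 * (φ j.2.1 x.2.1 * φ j.2.2 x.2.2) := by
    intro x
    rw [e3, hφ, ← Complex.exp_add, ← Complex.exp_add]
    ring_nf
  rw [← Set.Icc_prod_Icc, ← Set.Icc_prod_Icc]
  simp only [hsplit]
  rw [Measure.volume_eq_prod,
    setIntegral_prod_mul (φ j.1) (fun y : ℝ × ℝ => φ j.2.1 y.1 * φ j.2.2 y.2),
    Measure.volume_eq_prod, setIntegral_prod_mul (φ j.2.1) (φ j.2.2)]
  simp only [hφ, setIntegral_Icc_exp_two_pi_I_int_mul, ite_zero_mul_ite_zero, mul_one]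
  simp [Prod.ext_iff]

theorem e3_pt3 (hn : n ≠ 0) (j k : ℤ × ℤ × ℤ) :
    e3 j (pt3 n k) =
      cexp (2 * π * I / (2 * n : ℕ)) ^ (j.1 * k.1 + j.2.1 * k.2.1 + j.2.2 * k.2.2) := by
  rw [← Complex.exp_int_mul, e3, pt3]
  congr 1
  push_cast
  field_simp

theorem c3_eq_mul (n : ℕ) (k : ℤ × ℤ × ℤ) :
    (c3 n k : ℂ) = endpointWeight n k.1 * endpointWeight n k.2.1 * endpointWeight n k.2.2 := by
  simp only [c3, endpointWeight]
  split_ifs <;> norm_num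

theorem X3star_eq_sameParityCube (n : ℕ) : X3star n = sameParityCube (Icc (-n : ℤ) n) := by
  rw [X3star, box3, sameParityCube, ← Icc_product_Icc, ← Icc_product_Icc]

theorem X3_eq_sameParityCube (n : ℕ) : X3 n = sameParityCube (Ico (-n : ℤ) n) := by
  ext k
  simp only [X3, box3, sameParityCube, mem_filter, mem_product, mem_Icc, mem_Ico, Prod.le_def]
  omega

theorem sum_X3star_c3_mul_e3_of_mem_LamDagStar (hm : m < 2 * n) (hj : j ∈ LamDagStar m) :
    ∑ k ∈ X3star n, (c3 n k : ℂ) * e3 j (pt3 n k) = if j = 0 then 2 * (n : ℂ) ^ 3 else 0 := by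
  have hn : n ≠ 0 := by omega
  have hζ := Complex.isPrimitiveRoot_exp (2 * n) (by omega)
  have := sum_sameParityCube_zpow_of_mem_LamDagStar hζ hm _ _
    (weightedRootSum_Icc_endpointWeight hζ hn) hj
  simpa only [X3star_eq_sameParityCube, e3_pt3 hn, c3_eq_mul] using this

theorem sum_X3_e3_of_mem_LamDagStar (hm : m < 2 * n) (hj : j ∈ LamDagStar m) :
    ∑ k ∈ X3 n, e3 j (pt3 n k) = if j = 0 then 2 * (n : ℂ) ^ 3 else 0 := by
  have hn : n ≠ 0 := by omega
  have hζ := Complex.isPrimitiveRoot_exp (2 * n) (by omega)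
  have := sum_sameParityCube_zpow_of_mem_LamDagStar hζ hm _ 1 (weightedRootSum_Ico_one hζ) hj
  simpa only [X3_eq_sameParityCube, e3_pt3 hn, Pi.one_apply, one_mul] using this

end Cube

theorem trig_cubature_3d (n : ℕ) (hn : 2 ≤ n)
    (f : ℝ × ℝ × ℝ → ℂ)
    (hf : f ∈ Submodule.span ℂ (e3 '' (LamDagStar (2 * n - 1) : Set (ℤ × ℤ × ℤ)))) :
    (∫ x in Set.Icc ((-(1:ℝ)/2, -(1:ℝ)/2, -(1:ℝ)/2)) (((1:ℝ)/2, (1:ℝ)/2, (1:ℝ)/2)), f x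
        = (1 / (2 * (n : ℂ) ^ 3)) * ∑ k ∈ X3star n, (c3 n k : ℂ) * f (pt3 n k)) ∧
    (∫ x in Set.Icc ((-(1:ℝ)/2, -(1:ℝ)/2, -(1:ℝ)/2)) (((1:ℝ)/2, (1:ℝ)/2, (1:ℝ)/2)), f x
        = (1 / (2 * (n : ℂ) ^ 3)) * ∑ k ∈ X3 n, f (pt3 n k)) := by
  have hm : 2 * n - 1 < 2 * n := by omega
  have hweight : 1 / (2 * (n : ℂ) ^ 3) * (2 * n ^ 3) = 1 := one_div_mul_cancel (by simp; omega)
  constructor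
  · refine integral_eq_of_mem_span
      ((1 / (2 * (n : ℂ) ^ 3)) • ∑ k ∈ X3star n, (c3 n k : ℂ) • LinearMap.proj (pt3 n k))
      ?_ hf |>.trans (by simp)
    rintro _ ⟨j, hj, rfl⟩
    refine ⟨(continuous_e3 j).integrableOn_Icc, ?_⟩
    simp only [LinearMap.smul_apply, LinearMap.coe_sum, Finset.sum_apply, LinearMap.proj_apply,
      smul_eq_mul]
    rw [setIntegral_cube_e3, sum_X3star_c3_mul_e3_of_mem_LamDagStar hm hj, mul_ite, hweight,
      mul_zero]
  · refine integral_eq_of_mem_span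
      ((1 / (2 * (n : ℂ) ^ 3)) • ∑ k ∈ X3 n, LinearMap.proj (pt3 n k)) ?_ hf |>.trans (by simp)
    rintro _ ⟨j, hj, rfl⟩
    refine ⟨(continuous_e3 j).integrableOn_Icc, ?_⟩
    simp only [LinearMap.smul_apply, LinearMap.coe_sum, Finset.sum_apply, LinearMap.proj_apply,
      smul_eq_mul]
    rw [setIntegral_cube_e3, sum_X3_e3_of_mem_LamDagStar hm hj, mul_ite, hweight, mul_zero]
end

section
/- Let n ≥ 2 be an integer. For every real polynomial f in the linear span of the products T_{k₁}(t₁)T_{k₂}(t₂)T_{k₃}(t₃) of Chebyshev polynomials of the first kind with k₁,k₂,k₃ ≥ 0 and k_ν + k_μ ≤ 2n−1 for all 1 ≤ ν < μ ≤ 3 — in particular, for every real polynomial f in three variables of total degree at most 2n−1 — one has (1/π³) · ∫_{[−1,1]³} f(t) · Π_{i=1}^3 (1−t_i²)^{−1/2} dt = (1/(2n³)) · Σ_{k ∈ Ξ_n} λ_k · f(cos(k₁π/n), cos(k₂π/n), cos(k₃π/n)). -/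
open MeasureTheory Complex

attribute [local instance] Classical.propDecidable

/-- Ξ_n = {k : 0 ≤ k_i ≤ n, k1 ≡ k2 ≡ k3 (mod 2)}. -/
noncomputable def Xi3 (n : ℕ) : Finset (ℤ × ℤ × ℤ) :=
  (Finset.Icc ((0 : ℤ), (0 : ℤ), (0 : ℤ)) ((n : ℤ), (n : ℤ), (n : ℤ))).filter
    fun k => k.1 % 2 = k.2.1 % 2 ∧ k.2.1 % 2 = k.2.2 % 2

/-- The cubature weight λ_k = 2^{3-m}, m = #{i : k_i ∈ {0, n}}. -/
noncomputable def lam3 (n : ℕ) (k : ℤ × ℤ × ℤ) : ℝ :=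
  2 ^ (3 - ((if k.1 = 0 ∨ k.1 = (n : ℤ) then 1 else 0)
    + (if k.2.1 = 0 ∨ k.2.1 = (n : ℤ) then 1 else 0)
    + (if k.2.2 = 0 ∨ k.2.2 = (n : ℤ) then 1 else 0) : ℕ))

/-- Products of Chebyshev polynomials of the first kind with pairwise degree sums at most N. -/
def chebProducts (N : ℕ) : Set (ℝ × ℝ × ℝ → ℝ) :=
  { g | ∃ k : ℕ × ℕ × ℕ, k.1 + k.2.1 ≤ N ∧ k.1 + k.2.2 ≤ N ∧ k.2.1 + k.2.2 ≤ N ∧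
      g = fun t => (Polynomial.Chebyshev.T ℝ (k.1 : ℤ)).eval t.1 *
        (Polynomial.Chebyshev.T ℝ (k.2.1 : ℤ)).eval t.2.1 *
        (Polynomial.Chebyshev.T ℝ (k.2.2 : ℤ)).eval t.2.2 }

/-!
Both sides are linear in `f`, so it suffices to treat `f = T_{j₁}(t₁) T_{j₂}(t₂) T_{j₃}(t₃)`.
The substitution `t = cos θ` turns the integral into a product of three integrals
`∫₀^π cos (j θ) dθ`, which is `π³` if `j = 0` and `0` otherwise.

On the discrete side `λ_k` is a product of one-dimensional weights and the parity condition
splits `Ξ_n` into its even and its odd part, so the sum is `∑_{s ∈ {0, 1}}` of a product of three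
one-dimensional sums. Unfolding `[0, n]` to `[0, 2n)` by `m ↦ 2n - m` turns each of them into
`∑_{a < n} cos (j (2a + s) π / n)`, which is `n cos (j s π / n)` if `n ∣ j` and `0` otherwise.
As the pairwise degree sums are `< 2n`, at most one `j_i` is a nonzero multiple of `n`, and it
is then `n` itself; its two parities cancel, so only `j = 0` survives.
-/

open Real Polynomial.Chebyshev

theorem integrableOn_mul_inv_sqrt_one_sub_sq {f : ℝ → ℝ} (hf : ContinuousOn f (Set.Icc (-1) 1)) :
    IntegrableOn (fun x => f x * (√(1 - x ^ 2))⁻¹) (Set.Icc (-1) 1) := by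
  rw [integrableOn_Icc_iff_integrableOn_Ioc, ← Set.uIoc_of_le (by norm_num),
    ← intervalIntegrable_iff]
  simpa only [Real.sqrt_inv] using
    intervalIntegrable_sqrt_one_sub_sq_inv.continuousOn_mul (by rwa [Set.uIcc_of_le (by norm_num)])

theorem setIntegral_Icc_mul_inv_sqrt_one_sub_sq (f : ℝ → ℝ) :
    ∫ x in Set.Icc (-1) 1, f x * (√(1 - x ^ 2))⁻¹ = ∫ x, f x ∂measureT := by
  rw [integral_measureT, intervalIntegral.integral_of_le (by norm_num),
    integral_Icc_eq_integral_Ioc]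
  simp only [Real.sqrt_inv]

theorem setIntegral_eval_T_mul_inv_sqrt_one_sub_sq (j : ℤ) :
    ∫ x in Set.Icc (-1) 1, (T ℝ j).eval x * (√(1 - x ^ 2))⁻¹ = if j = 0 then π else 0 := by
  rw [setIntegral_Icc_mul_inv_sqrt_one_sub_sq]
  split_ifs with hj
  · rw [hj]; exact integral_eval_T_real_measureT_zero
  · exact integral_eval_T_real_measureT_of_ne_zero hj

section
variable {α β γ : Type*} [MeasureSpace α] [MeasureSpace β] [MeasureSpace γ]
  [SFinite (volume : Measure α)] [SFinite (volume : Measure β)] [SFinite (volume : Measure γ)]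

theorem setIntegral_prod_prod_mul (s : Set α) (t : Set β) (u : Set γ) (f : α → ℝ) (g : β → ℝ)
    (h : γ → ℝ) :
    ∫ x in s ×ˢ t ×ˢ u, f x.1 * g x.2.1 * h x.2.2 =
      (∫ x in s, f x) * (∫ y in t, g y) * ∫ z in u, h z := by
  simp_rw [mul_assoc]
  rw [Measure.volume_eq_prod α, Measure.volume_eq_prod β,
    setIntegral_prod_mul f (fun y : β × γ => g y.1 * h y.2), setIntegral_prod_mul]

theorem MeasureTheory.IntegrableOn.prod_prod_mul {s : Set α} {t : Set β} {u : Set γ}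
    {f : α → ℝ} {g : β → ℝ} {h : γ → ℝ} (hf : IntegrableOn f s) (hg : IntegrableOn g t)
    (hh : IntegrableOn h u) :
    IntegrableOn (fun x => f x.1 * g x.2.1 * h x.2.2) (s ×ˢ t ×ˢ u) := by
  simp_rw [mul_assoc]
  rw [IntegrableOn, Measure.volume_eq_prod α, Measure.volume_eq_prod β, ← Measure.prod_restrict,
    ← Measure.prod_restrict]
  exact hf.mul_prod (hg.mul_prod hh)

end

-- For `0 ≤ m ≤ n`, the number of `k ∈ [0, 2n)` with `min k (2n - k) = m`.
noncomputable def lobattoWeight (n : ℕ) (m : ℤ) : ℝ := if m = 0 ∨ m = n then 1 else 2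

theorem lam3_eq_mul (n : ℕ) (k : ℤ × ℤ × ℤ) :
    lam3 n k = lobattoWeight n k.1 * lobattoWeight n k.2.1 * lobattoWeight n k.2.2 := by
  unfold lam3 lobattoWeight
  split_ifs <;> norm_num

noncomputable def parityIcc (n : ℕ) (s : ℤ) : Finset ℤ :=
  (Finset.Icc 0 (n : ℤ)).filter (· % 2 = s)

theorem Xi3_eq_biUnion (n : ℕ) :
    Xi3 n = ({0, 1} : Finset ℤ).biUnion
      fun s => parityIcc n s ×ˢ parityIcc n s ×ˢ parityIcc n s := by
  ext ⟨a, b, c⟩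
  simp only [Xi3, parityIcc, Finset.mem_filter, Finset.mem_biUnion, Finset.mem_product,
    Finset.mem_Icc, Finset.mem_insert, Finset.mem_singleton]
  constructor
  · rintro ⟨h, hab, hbc⟩
    exact ⟨c % 2, by omega, by simp only [Prod.mk_le_mk] at h; omega⟩
  · rintro ⟨s, hs, h⟩
    simp only [Prod.mk_le_mk]
    omega

theorem sum_Xi3_mul (n : ℕ) (F G H : ℤ → ℝ) :
    ∑ k ∈ Xi3 n, F k.1 * G k.2.1 * H k.2.2 =
      ∑ s ∈ ({0, 1} : Finset ℤ), (∑ m ∈ parityIcc n s, F m) * (∑ m ∈ parityIcc n s, G m) *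
        ∑ m ∈ parityIcc n s, H m := by
  rw [Xi3_eq_biUnion, Finset.sum_biUnion]
  · refine Finset.sum_congr rfl fun s _ => ?_
    rw [Finset.sum_mul_sum, Finset.sum_mul]
    simp_rw [Finset.sum_product, Finset.sum_mul, Finset.mul_sum]
  · intro s _ s' _ hss'
    refine Finset.disjoint_left.2 fun k hk hk' => hss' ?_
    simp only [parityIcc, Finset.mem_product, Finset.mem_filter] at hk hk'
    rw [← hk.1.2, hk'.1.2]

theorem sum_filter_Icc_lobattoWeight_mul {n : ℕ} (hn : 0 < n) (P : ℤ → Prop) [DecidablePred P]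
    (hP : ∀ m, P (2 * n - m) ↔ P m) (g : ℤ → ℝ) (hg : ∀ m, g (2 * n - m) = g m) :
    ∑ m ∈ (Finset.Icc 0 (n : ℤ)).filter P, lobattoWeight n m * g m =
      ∑ m ∈ (Finset.Ico 0 (2 * n : ℤ)).filter P, g m := by
  have hfold : ∑ m ∈ (Finset.Ico 0 (2 * n : ℤ)).filter P, g m =
      ∑ m ∈ (Finset.Icc 0 (n : ℤ)).filter P, g m + ∑ m ∈ (Finset.Ioo 0 (n : ℤ)).filter P, g m := by
    have hsplit : Finset.Ico 0 (2 * n : ℤ) = Finset.Icc 0 (n : ℤ) ∪ Finset.Ioo (n : ℤ) (2 * n) := by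
      ext m; simp only [Finset.mem_Ico, Finset.mem_union, Finset.mem_Icc, Finset.mem_Ioo]; omega
    rw [hsplit, Finset.filter_union, Finset.sum_union]
    · congr 1
      refine Finset.sum_nbij' (fun m => 2 * n - m) (fun m => 2 * n - m) ?_ ?_ ?_ ?_ ?_
      · intro m hm
        simp only [Finset.mem_filter, Finset.mem_Ioo] at hm ⊢
        exact ⟨by omega, (hP m).2 hm.2⟩
      · intro m hm
        simp only [Finset.mem_filter, Finset.mem_Ioo] at hm ⊢
        exact ⟨by omega, (hP m).2 hm.2⟩
      · intro m _; ring
      · intro m _; ring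
      · intro m _; exact (hg m).symm
    · exact Finset.disjoint_filter_filter (Finset.disjoint_left.2 fun m hm hm' => by
        simp only [Finset.mem_Icc, Finset.mem_Ioo] at hm hm'; omega)
  have hweight : ∀ m ∈ (Finset.Icc 0 (n : ℤ)).filter P,
      lobattoWeight n m * g m = g m + if m ∈ Finset.Ioo 0 (n : ℤ) then g m else 0 := by
    intro m hm
    simp only [Finset.mem_filter, Finset.mem_Icc, Finset.mem_Ioo] at hm ⊢
    unfold lobattoWeight
    split_ifs <;> first | omega | ring
  rw [Finset.sum_congr rfl hweight, Finset.sum_add_distrib, Finset.sum_ite_mem, hfold]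
  congr 2
  ext m
  simp only [Finset.mem_inter, Finset.mem_filter, Finset.mem_Icc, Finset.mem_Ioo]
  exact ⟨fun ⟨⟨_, hPm⟩, hm⟩ => ⟨hm, hPm⟩, fun ⟨hm, hPm⟩ => ⟨⟨⟨hm.1.le, hm.2.le⟩, hPm⟩, hm⟩⟩

theorem sum_filter_Ico_emod_two {s : ℤ} (hs : s = 0 ∨ s = 1) (n : ℕ) (g : ℤ → ℝ) :
    ∑ m ∈ (Finset.Ico 0 (2 * n : ℤ)).filter (· % 2 = s), g m =
      ∑ a ∈ Finset.range n, g (2 * a + s) := by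
  symm
  refine Finset.sum_nbij' (fun a => 2 * a + s) (fun m => (m / 2).toNat) ?_ ?_ ?_ ?_ fun _ _ => rfl
  · intro a ha
    simp only [Finset.mem_range, Finset.mem_filter, Finset.mem_Ico] at ha ⊢
    omega
  · intro m hm
    simp only [Finset.mem_range, Finset.mem_filter, Finset.mem_Ico] at hm ⊢
    omega
  · intro a _
    omega
  · intro m hm
    simp only [Finset.mem_filter, Finset.mem_Ico] at hm
    omega

theorem sum_range_cos_mul_add (n j : ℕ) (b : ℝ) :
    ∑ i ∈ Finset.range n, Real.cos (2 * π * j / n * i + b) =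
      if n ∣ j then n * Real.cos b else 0 := by
  rcases Nat.eq_zero_or_pos n with rfl | hn
  · simp
  split_ifs with hj
  · obtain ⟨q, rfl⟩ := hj
    have hterm : ∀ i : ℕ, Real.cos (2 * π * ↑(n * q) / n * i + b) = Real.cos b := fun i => by
      have : 2 * π * ↑(n * q) / n * i + b = b + ↑(q * i : ℕ) * (2 * π) := by
        push_cast; field_simp; ring
      rw [this, Real.cos_add_nat_mul_two_pi]
    rw [Finset.sum_congr rfl fun i _ => hterm i, Finset.sum_const, Finset.card_range,
      nsmul_eq_mul]
  · have hsin : Real.sin (2 * π * j / n / 2) ≠ 0 := by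
      rw [Ne, Real.sin_eq_zero_iff]
      rintro ⟨m, hm⟩
      have : (j : ℝ) = m * n := by field_simp at hm; linarith [pi_pos]
      exact hj (Int.natCast_dvd_natCast.1 ⟨m, by rw [mul_comm]; exact_mod_cast this⟩)
    have := Real.sin_mul_sum_cos n (2 * π * j / n) b
    rw [show n * (2 * π * j / n) / 2 = (j : ℕ) * π by field_simp, Real.sin_nat_mul_pi,
      zero_mul] at this
    exact (mul_eq_zero.1 this).resolve_left hsin

theorem sum_parityIcc_lobattoWeight_mul_cos {n : ℕ} (hn : 0 < n) (j : ℕ) {s : ℤ}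
    (hs : s = 0 ∨ s = 1) :
    ∑ m ∈ parityIcc n s, lobattoWeight n m * Real.cos (j * (m * π / n)) =
      if n ∣ j then n * Real.cos (j * (s * π / n)) else 0 := by
  have hsymm : ∀ m : ℤ, Real.cos (j * (↑(2 * n - m) * π / n)) = Real.cos (j * (m * π / n)) := by
    intro m
    rw [← Real.cos_nat_mul_two_pi_sub _ j]
    congr 1
    push_cast
    field_simp
    ring
  rw [parityIcc, sum_filter_Icc_lobattoWeight_mul hn _ (fun m => by omega) _ hsymm,
    sum_filter_Ico_emod_two hs, ← sum_range_cos_mul_add]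
  refine Finset.sum_congr rfl fun a _ => congrArg Real.cos ?_
  push_cast
  field_simp

theorem Nat.eq_zero_or_eq_of_dvd_of_lt_two_mul {n j : ℕ} (hdvd : n ∣ j) (hj : j < 2 * n) :
    j = 0 ∨ j = n := by
  obtain ⟨q, rfl⟩ := hdvd
  have : q < 2 := Nat.lt_of_mul_lt_mul_left (a := n) (by linarith)
  interval_cases q <;> simp

theorem sum_Xi3_lam3_mul_cos {n : ℕ} (hn : 0 < n) {j₁ j₂ j₃ : ℕ} (h₁₂ : j₁ + j₂ < 2 * n)
    (h₁₃ : j₁ + j₃ < 2 * n) (h₂₃ : j₂ + j₃ < 2 * n) :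
    ∑ k ∈ Xi3 n, lam3 n k * (Real.cos (j₁ * (k.1 * π / n)) * Real.cos (j₂ * (k.2.1 * π / n)) *
      Real.cos (j₃ * (k.2.2 * π / n))) =
      if j₁ = 0 ∧ j₂ = 0 ∧ j₃ = 0 then 2 * (n : ℝ) ^ 3 else 0 := by
  have hfactor : ∀ k : ℤ × ℤ × ℤ, lam3 n k * (Real.cos (j₁ * (k.1 * π / n)) *
      Real.cos (j₂ * (k.2.1 * π / n)) * Real.cos (j₃ * (k.2.2 * π / n))) =
      lobattoWeight n k.1 * Real.cos (j₁ * (k.1 * π / n)) *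
        (lobattoWeight n k.2.1 * Real.cos (j₂ * (k.2.1 * π / n))) *
        (lobattoWeight n k.2.2 * Real.cos (j₃ * (k.2.2 * π / n))) := fun k => by
    rw [lam3_eq_mul]; ring
  simp_rw [hfactor]
  rw [sum_Xi3_mul n (fun m => lobattoWeight n m * Real.cos (j₁ * (m * π / n)))
    (fun m => lobattoWeight n m * Real.cos (j₂ * (m * π / n)))
    (fun m => lobattoWeight n m * Real.cos (j₃ * (m * π / n))), Finset.sum_pair zero_ne_one]
  simp only [sum_parityIcc_lobattoWeight_mul_cos hn _ (Or.inl rfl),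
    sum_parityIcc_lobattoWeight_mul_cos hn _ (Or.inr rfl)]
  by_cases hdvd : n ∣ j₁ ∧ n ∣ j₂ ∧ n ∣ j₃
  · obtain ⟨hd₁, hd₂, hd₃⟩ := hdvd
    have hnR : (n : ℝ) ≠ 0 := by positivity
    rcases Nat.eq_zero_or_eq_of_dvd_of_lt_two_mul hd₁ (by omega) with rfl | rfl <;>
    rcases Nat.eq_zero_or_eq_of_dvd_of_lt_two_mul hd₂ (by omega) with rfl | rfl <;>
    rcases Nat.eq_zero_or_eq_of_dvd_of_lt_two_mul hd₃ (by omega) with rfl | rfl <;>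
    first | omega | (simp [hn.ne', mul_div_cancel₀ π hnR] <;> ring)
  · have hne : ¬(j₁ = 0 ∧ j₂ = 0 ∧ j₃ = 0) := by rintro ⟨rfl, rfl, rfl⟩; simp at hdvd
    rw [if_neg hne]
    simp only [not_and_or] at hdvd
    rcases hdvd with h | h | h <;> simp [h]

theorem integral_mul_eq_sum_of_mem_span {α ι : Type*} [MeasurableSpace α] {μ : Measure α}
    {W : α → ℝ} {s : Finset ι} {x : ι → α} {w : ι → ℝ} {S : Set (α → ℝ)}
    (hS : ∀ g ∈ S, Integrable (fun t => g t * W t) μ ∧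
      ∫ t, g t * W t ∂μ = ∑ i ∈ s, w i * g (x i))
    {f : α → ℝ} (hf : f ∈ Submodule.span ℝ S) :
    Integrable (fun t => f t * W t) μ ∧ ∫ t, f t * W t ∂μ = ∑ i ∈ s, w i * f (x i) := by
  induction hf using Submodule.span_induction with
  | mem g hg => exact hS g hg
  | zero => simp
  | add f g _ _ hf hg =>
    simp only [Pi.add_apply, add_mul, mul_add, Finset.sum_add_distrib]
    exact ⟨hf.1.add hg.1, by rw [integral_add hf.1 hg.1, hf.2, hg.2]⟩
  | smul c f _ hf =>
    simp only [Pi.smul_apply, smul_eq_mul, mul_assoc, integral_const_mul, hf.2, Finset.mul_sum]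
    exact ⟨hf.1.const_mul c, Finset.sum_congr rfl fun i _ => by ring⟩

noncomputable def chebWeight3 (t : ℝ × ℝ × ℝ) : ℝ :=
  (√(1 - t.1 ^ 2))⁻¹ * (√(1 - t.2.1 ^ 2))⁻¹ * (√(1 - t.2.2 ^ 2))⁻¹

theorem chebProducts_cubature {n : ℕ} (hn : 0 < n) {g : ℝ × ℝ × ℝ → ℝ}
    (hg : g ∈ chebProducts (2 * n - 1)) :
    IntegrableOn (fun t => g t * chebWeight3 t) (Set.Icc (-1, -1, -1) (1, 1, 1)) ∧
      ∫ t in Set.Icc (-1, -1, -1) (1, 1, 1), g t * chebWeight3 t =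
        ∑ k ∈ Xi3 n, π ^ 3 / (2 * n ^ 3) * lam3 n k *
          g (Real.cos (k.1 * π / n), Real.cos (k.2.1 * π / n), Real.cos (k.2.2 * π / n)) := by
  obtain ⟨⟨j₁, j₂, j₃⟩, h₁₂, h₁₃, h₂₃, rfl⟩ := hg
  dsimp only at h₁₂ h₁₃ h₂₃
  set φ : ℕ → ℝ → ℝ := fun j x => (T ℝ j).eval x * (√(1 - x ^ 2))⁻¹
  have hprod : (fun t : ℝ × ℝ × ℝ => (T ℝ j₁).eval t.1 * (T ℝ j₂).eval t.2.1 *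
      (T ℝ j₃).eval t.2.2 * chebWeight3 t) = fun t => φ j₁ t.1 * φ j₂ t.2.1 * φ j₃ t.2.2 := by
    funext t; simp only [φ, chebWeight3]; ring
  have hbox : Set.Icc ((-1 : ℝ), (-1 : ℝ), (-1 : ℝ)) (1, 1, 1) =
      Set.Icc (-1) 1 ×ˢ Set.Icc (-1) 1 ×ˢ Set.Icc (-1) 1 := by
    rw [Set.Icc_prod_eq, Set.Icc_prod_eq]
  have hφ : ∀ j, IntegrableOn (φ j) (Set.Icc (-1) 1) := fun j =>
    integrableOn_mul_inv_sqrt_one_sub_sq (T ℝ j).continuous.continuousOn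
  refine ⟨by rw [hprod, hbox]; exact (hφ j₁).prod_prod_mul (hφ j₂) (hφ j₃), ?_⟩
  have hnodes : ∀ k : ℤ × ℤ × ℤ, (T ℝ j₁).eval (Real.cos (k.1 * π / n)) *
      (T ℝ j₂).eval (Real.cos (k.2.1 * π / n)) * (T ℝ j₃).eval (Real.cos (k.2.2 * π / n)) =
      Real.cos (j₁ * (k.1 * π / n)) * Real.cos (j₂ * (k.2.1 * π / n)) *
        Real.cos (j₃ * (k.2.2 * π / n)) := fun k => by
    simp only [T_real_cos, Int.cast_natCast]
  simp_rw [hprod, hbox, setIntegral_prod_prod_mul, φ, setIntegral_eval_T_mul_inv_sqrt_one_sub_sq,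
    mul_assoc _ (lam3 n _), hnodes, ← Finset.mul_sum]
  rw [sum_Xi3_lam3_mul_cos hn (by omega) (by omega) (by omega)]
  have hnR : (n : ℝ) ≠ 0 := by positivity
  simp only [Nat.cast_eq_zero]
  split_ifs <;> simp_all
  field_simp

theorem cubature_first_kind_3d (n : ℕ) (hn : 2 ≤ n)
    (f : ℝ × ℝ × ℝ → ℝ) (hf : f ∈ Submodule.span ℝ (chebProducts (2 * n - 1))) :
    (1 / Real.pi ^ 3) *
        ∫ t in Set.Icc ((-(1:ℝ), -(1:ℝ), -(1:ℝ))) (((1:ℝ), (1:ℝ), (1:ℝ))),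
          f t * ((Real.sqrt (1 - t.1 ^ 2))⁻¹ * (Real.sqrt (1 - t.2.1 ^ 2))⁻¹ *
            (Real.sqrt (1 - t.2.2 ^ 2))⁻¹)
      = (1 / (2 * (n : ℝ) ^ 3)) *
          ∑ k ∈ Xi3 n, lam3 n k *
            f (Real.cos (k.1 * Real.pi / n), Real.cos (k.2.1 * Real.pi / n),
               Real.cos (k.2.2 * Real.pi / n)) := by
  have key := (integral_mul_eq_sum_of_mem_span
    (fun g hg => chebProducts_cubature (by omega : 0 < n) hg) hf).2
  unfold chebWeight3 at key
  rw [key, Finset.mul_sum, Finset.mul_sum]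
  refine Finset.sum_congr rfl fun k _ => ?_
  field_simp
end

section
/- Let n ≥ 3 be an integer. For every real polynomial f in the linear span of the products T_{k₁}(t₁)T_{k₂}(t₂)T_{k₃}(t₃) of Chebyshev polynomials of the first kind with k₁,k₂,k₃ ≥ 0 and k_ν + k_μ ≤ 2n−5 for all 1 ≤ ν < μ ≤ 3 — in particular, for every real polynomial f in three variables of total degree at most 2n−5 — one has (1/π³) · ∫_{[−1,1]³} f(t) · Π_{i=1}^3 √(1−t_i²) dt = (4/n³) · Σ_{k ∈ Ξ_n with 0 < k_i < n for i=1,2,3} sin²(k₁π/n) · sin²(k₂π/n) · sin²(k₃π/n) · f(cos(k₁π/n), cos(k₂π/n), cos(k₃π/n)). -/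
open MeasureTheory Complex

attribute [local instance] Classical.propDecidable

/-!
Both sides are linear in `f`, so it suffices to take `f t = T_{j₁}(t₁) T_{j₂}(t₂) T_{j₃}(t₃)`, for
which both sides factor into one-dimensional quantities. Substituting `t = cos θ`,
`∫_{-1}^{1} T_j(t) √(1 - t²) dt = ∫_0^π sin² θ cos (jθ) dθ = π c_j`, where `c_j` is the
coefficient of `e^{ijθ}` in `sin² θ = 1/2 - e^{2iθ}/4 - e^{-2iθ}/4`. Its discrete analogue
`∑_{0<a<n} sin² (aπ/n) T_j(cos (aπ/n)) = n c_j` holds for `j ≤ 2n - 3`, because the cosine sums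
over the nodes are exact up to frequency `2n`.
The parity condition on the nodes is removed by writing its indicator as
`(1 + (-1)^(a+b) + (-1)^(b+c) + (-1)^(a+c)) / 4`. At the nodes the sign `(-1)^a` turns `T_j` into
`T_{j+n}`, whose sum vanishes when `j ≤ n - 3`; since `j_ν + j_μ ≤ 2n - 5`, every twisted term
has such a factor, and only the untwisted term `n³ c_{j₁} c_{j₂} c_{j₃} / 4` survives.
-/

open Finset Polynomial.Chebyshev
open scoped Real

/-- `sin² θ = ∑ₘ sinSqCoeff m * e^{imθ}`. -/
noncomputable def sinSqCoeff (m : ℤ) : ℝ :=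
  (if m = 0 then 1 / 2 else 0) - (if m + 2 = 0 then 1 / 4 else 0) -
    (if m - 2 = 0 then 1 / 4 else 0)

namespace Real

lemma sin_sq_mul_cos_int_mul (m : ℤ) (x : ℝ) :
    sin x ^ 2 * cos (m * x) =
      cos (m * x) / 2 - cos (((m + 2 : ℤ) : ℝ) * x) / 4 - cos (((m - 2 : ℤ) : ℝ) * x) / 4 := by
  push_cast
  rw [add_mul, sub_mul, cos_add, cos_sub, cos_two_mul, sin_two_mul]
  linear_combination cos (m * x) * sin_sq_add_cos_sq x

lemma integral_cos_int_mul (m : ℤ) :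
    ∫ x in (0 : ℝ)..π, cos (m * x) = if m = 0 then π else 0 := by
  rcases eq_or_ne m 0 with rfl | hm
  · simp
  rw [if_neg hm, intervalIntegral.integral_comp_mul_left (fun x => cos x) (by exact_mod_cast hm),
    integral_cos, mul_zero, sin_zero, sub_zero, sin_int_mul_pi, smul_zero]

lemma integral_sin_sq_mul_cos_int_mul (m : ℤ) :
    ∫ x in (0 : ℝ)..π, sin x ^ 2 * cos (m * x) = π * sinSqCoeff m := by
  simp_rw [sin_sq_mul_cos_int_mul]
  rw [intervalIntegral.integral_sub, intervalIntegral.integral_sub, intervalIntegral.integral_div,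
    intervalIntegral.integral_div, intervalIntegral.integral_div, integral_cos_int_mul,
    integral_cos_int_mul, integral_cos_int_mul, sinSqCoeff]
  · split_ifs <;> ring
  all_goals exact Continuous.intervalIntegrable (by fun_prop) _ _

/-- Unlike `integral_cos_int_mul`, the sum does not vanish for odd `m`; the defect
`sin (m * π / 2) ^ 2` is the same for `m` and `m ± 2`, so it cancels in
`sum_range_sin_sq_mul_cos`. -/
lemma sum_range_cos_int_mul_pi_div {n : ℕ} {m : ℤ} (hm : |m| < 2 * n) :
    ∑ i ∈ range n, cos (m * (i * π / n)) = sin (m * π / 2) ^ 2 + if m = 0 then (n : ℝ) else 0 := by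
  rcases eq_or_ne m 0 with rfl | hm0
  · simp
  have hn : (0 : ℝ) < n := by
    have : (0 : ℤ) < n := by linarith [abs_nonneg m]
    exact_mod_cast this
  obtain ⟨hlo, hhi⟩ := abs_lt.mp (show |(m : ℝ)| < 2 * n by exact_mod_cast hm)
  have hsin : sin (m * π / n / 2) ≠ 0 := by
    rw [Ne, sin_eq_zero_iff_of_lt_of_lt]
    · have : (m : ℝ) ≠ 0 := by exact_mod_cast hm0
      positivity
    · rw [div_div, lt_div_iff₀ (by positivity)]; nlinarith [pi_pos]
    · rw [div_div, div_lt_iff₀ (by positivity)]; nlinarith [pi_pos]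
  have hsin_mul_cos : sin (m * π / 2) * cos (m * π / 2) = 0 := by
    have := sin_two_mul (m * π / 2)
    rw [show 2 * (m * π / 2) = m * π by ring, sin_int_mul_pi] at this
    linarith
  apply mul_left_cancel₀ hsin
  have hdirichlet := sin_mul_sum_cos n (m * π / n) 0
  have hterm (i : ℕ) : (m : ℝ) * (i * π / n) = m * π / n * i := by ring
  have hmid : (n : ℝ) * (m * π / n) / 2 = m * π / 2 := by field_simp
  have hshift : ((n : ℝ) - 1) * (m * π / n) / 2 = m * π / 2 - m * π / n / 2 := by field_simp
  simp only [add_zero] at hdirichlet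
  simp_rw [hterm]
  rw [hdirichlet, hmid, hshift, cos_sub, if_neg hm0, add_zero]
  linear_combination cos (m * π / n / 2) * hsin_mul_cos

lemma sum_range_sin_sq_mul_cos {n : ℕ} {m : ℤ} (hm : |m| + 2 < 2 * n) :
    ∑ i ∈ range n, sin (i * π / n) ^ 2 * cos (m * (i * π / n)) = n * sinSqCoeff m := by
  obtain ⟨hlo, hhi⟩ := abs_lt.mp (show |m| < 2 * n - 2 by linarith)
  have hplus : sin (((m + 2 : ℤ) : ℝ) * π / 2) ^ 2 = sin (m * π / 2) ^ 2 := by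
    rw [Int.cast_add, Int.cast_two, add_mul, add_div, mul_div_cancel_left₀ _ two_ne_zero,
      sin_add_pi, neg_sq]
  have hminus : sin (((m - 2 : ℤ) : ℝ) * π / 2) ^ 2 = sin (m * π / 2) ^ 2 := by
    rw [Int.cast_sub, Int.cast_two, sub_mul, sub_div, mul_div_cancel_left₀ _ two_ne_zero,
      sin_sub_pi, neg_sq]
  simp_rw [sin_sq_mul_cos_int_mul]
  rw [sum_sub_distrib, sum_sub_distrib, ← sum_div, ← sum_div, ← sum_div,
    sum_range_cos_int_mul_pi_div (abs_lt.mpr ⟨by omega, by omega⟩),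
    sum_range_cos_int_mul_pi_div (abs_lt.mpr ⟨by omega, by omega⟩),
    sum_range_cos_int_mul_pi_div (abs_lt.mpr ⟨by omega, by omega⟩),
    hplus, hminus, sinSqCoeff]
  split_ifs <;> ring

end Real

lemma integral_chebyshevT_mul_sqrt (m : ℤ) :
    ∫ t in Set.Icc (-1 : ℝ) 1, (T ℝ m).eval t * √(1 - t ^ 2) = π * sinSqCoeff m := by
  have hsubst := intervalIntegral.integral_comp_mul_deriv (a := π) (b := 0) (f := Real.cos)
    (f' := fun x => -Real.sin x) (g := fun t => (T ℝ m).eval t * √(1 - t ^ 2))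
    (fun x _ => Real.hasDerivAt_cos x) (by fun_prop) (by fun_prop)
  rw [Real.cos_pi, Real.cos_zero] at hsubst
  rw [integral_Icc_eq_integral_Ioc, ← intervalIntegral.integral_of_le (by norm_num), ← hsubst,
    intervalIntegral.integral_symm, ← intervalIntegral.integral_neg,
    ← Real.integral_sin_sq_mul_cos_int_mul]
  refine intervalIntegral.integral_congr fun x hx => ?_
  rw [Set.uIcc_of_le Real.pi_pos.le] at hx
  have hsqrt : √(1 - Real.cos x ^ 2) = Real.sin x := by
    rw [← Real.sin_sq, Real.sqrt_sq (Real.sin_nonneg_of_nonneg_of_le_pi hx.1 hx.2)]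
  simp only [Function.comp_apply, T_real_cos, hsqrt]
  ring

lemma sum_Ioo_int_eq_sum_range {M : Type*} [AddCommMonoid M] {g : ℤ → M} (hg : g 0 = 0)
    (n : ℕ) : ∑ a ∈ Ioo (0 : ℤ) n, g a = ∑ i ∈ range n, g i := by
  rw [show ∑ i ∈ range n, g i = ∑ a ∈ (range n).map Nat.castEmbedding, g a from
    (sum_map (range n) Nat.castEmbedding g).symm]
  refine sum_subset (fun a ha => ?_) (fun a ha ha' => ?_)
  · simp only [mem_Ioo] at ha
    simp only [mem_map, mem_range, Nat.castEmbedding_apply]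
    exact ⟨a.toNat, by omega, by omega⟩
  · simp only [mem_map, mem_range, Nat.castEmbedding_apply, mem_Ioo] at ha ha'
    obtain ⟨i, hi, rfl⟩ := ha
    rw [show i = 0 by omega, Nat.cast_zero, hg]

lemma sum_sin_sq_mul_chebyshevT {n : ℕ} {m : ℤ} (hm : |m| + 2 < 2 * n) :
    ∑ a ∈ Ioo (0 : ℤ) n, Real.sin (a * π / n) ^ 2 * (T ℝ m).eval (Real.cos (a * π / n)) =
      n * sinSqCoeff m := by
  rw [sum_Ioo_int_eq_sum_range (by simp), ← Real.sum_range_sin_sq_mul_cos hm]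
  simp [T_real_cos]

lemma neg_one_zpow_mul_chebyshevT_cos {n : ℕ} (hn : n ≠ 0) (m a : ℤ) :
    (-1) ^ a * (T ℝ m).eval (Real.cos (a * π / n)) = (T ℝ (m + n)).eval (Real.cos (a * π / n)) := by
  rw [T_real_cos, T_real_cos, ← Real.cos_add_int_mul_pi]
  congr 1
  push_cast
  field_simp

lemma sum_neg_one_zpow_mul_sin_sq_mul_chebyshevT {n j : ℕ} (hj : j + 3 ≤ n) :
    ∑ a ∈ Ioo (0 : ℤ) n,
      (-1) ^ a * (Real.sin (a * π / n) ^ 2 * (T ℝ j).eval (Real.cos (a * π / n))) = 0 := by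
  simp_rw [mul_left_comm _ (Real.sin _ ^ 2), neg_one_zpow_mul_chebyshevT_cos (by omega : n ≠ 0)]
  rw [sum_sin_sq_mul_chebyshevT (by rw [abs_of_nonneg (by omega)]; omega), sinSqCoeff,
    if_neg (by omega), if_neg (by omega), if_neg (by omega)]
  simp

lemma sum_product_product_mul {ι R : Type*} [CommSemiring R] (A B C : Finset ι)
    (u v w : ι → R) :
    ∑ k ∈ A ×ˢ B ×ˢ C, u k.1 * v k.2.1 * w k.2.2 =
      (∑ a ∈ A, u a) * (∑ b ∈ B, v b) * (∑ c ∈ C, w c) := by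
  simp only [sum_product, ← mul_sum, ← sum_mul]

section Parity

variable {K : Type*} [Field K] [CharZero K]

lemma ite_emod_two_eq_and (a b c : ℤ) :
    (if a % 2 = b % 2 ∧ b % 2 = c % 2 then (1 : K) else 0) =
      (1 + (-1) ^ a * (-1) ^ b + (-1) ^ b * (-1) ^ c + (-1) ^ a * (-1) ^ c) / 4 := by
  simp only [neg_one_zpow_eq_ite, Int.even_iff]
  rcases Int.emod_two_eq a with ha | ha <;> rcases Int.emod_two_eq b with hb | hb <;>
    rcases Int.emod_two_eq c with hc | hc <;> simp [ha, hb, hc] <;> norm_num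

lemma sum_filter_emod_two_eq_mul (A : Finset ℤ) (u v w : ℤ → K) :
    ∑ k ∈ (A ×ˢ A ×ˢ A).filter (fun k => k.1 % 2 = k.2.1 % 2 ∧ k.2.1 % 2 = k.2.2 % 2),
        u k.1 * v k.2.1 * w k.2.2 =
      ((∑ a ∈ A, u a) * (∑ a ∈ A, v a) * (∑ a ∈ A, w a) +
        (∑ a ∈ A, (-1) ^ a * u a) * (∑ a ∈ A, (-1) ^ a * v a) * (∑ a ∈ A, w a) +
        (∑ a ∈ A, u a) * (∑ a ∈ A, (-1) ^ a * v a) * (∑ a ∈ A, (-1) ^ a * w a) +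
        (∑ a ∈ A, (-1) ^ a * u a) * (∑ a ∈ A, v a) * (∑ a ∈ A, (-1) ^ a * w a)) / 4 := by
  simp only [← sum_product_product_mul, ← sum_add_distrib, sum_div, sum_filter]
  refine sum_congr rfl fun k _ => ?_
  rw [← boole_mul, ite_emod_two_eq_and]
  ring

end Parity

lemma setIntegral_prod_prod_mul_s13 {α β γ : Type*} [MeasurableSpace α] [MeasurableSpace β]
    [MeasurableSpace γ] {μ : Measure α} {ν : Measure β} {ρ : Measure γ} [SFinite μ] [SFinite ν]
    [SFinite ρ] (u : α → ℝ) (v : β → ℝ) (w : γ → ℝ) (s : Set α) (t : Set β) (r : Set γ) :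
    ∫ z in s ×ˢ t ×ˢ r, u z.1 * v z.2.1 * w z.2.2 ∂μ.prod (ν.prod ρ) =
      (∫ x in s, u x ∂μ) * (∫ y in t, v y ∂ν) * ∫ z in r, w z ∂ρ := by
  simp_rw [mul_assoc]
  rw [setIntegral_prod_mul u (fun y : β × γ => v y.1 * w y.2), setIntegral_prod_mul]

noncomputable def chebyshevUWeight (t : ℝ × ℝ × ℝ) : ℝ :=
  √(1 - t.1 ^ 2) * √(1 - t.2.1 ^ 2) * √(1 - t.2.2 ^ 2)

lemma continuous_chebyshevUWeight : Continuous chebyshevUWeight := by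
  unfold chebyshevUWeight; fun_prop

lemma integral_chebyshevT_mul_chebyshevUWeight (j₁ j₂ j₃ : ℤ) :
    ∫ t in Set.Icc (-1, -1, -1) (1, 1, 1),
        (T ℝ j₁).eval t.1 * (T ℝ j₂).eval t.2.1 * (T ℝ j₃).eval t.2.2 * chebyshevUWeight t =
      π ^ 3 * (sinSqCoeff j₁ * sinSqCoeff j₂ * sinSqCoeff j₃) := by
  have hsplit (t : ℝ × ℝ × ℝ) :
      (T ℝ j₁).eval t.1 * (T ℝ j₂).eval t.2.1 * (T ℝ j₃).eval t.2.2 * chebyshevUWeight t =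
        (T ℝ j₁).eval t.1 * √(1 - t.1 ^ 2) * ((T ℝ j₂).eval t.2.1 * √(1 - t.2.1 ^ 2)) *
          ((T ℝ j₃).eval t.2.2 * √(1 - t.2.2 ^ 2)) := by
    rw [chebyshevUWeight]; ring
  have hfubini := setIntegral_prod_prod_mul_s13 (μ := volume) (ν := volume) (ρ := volume)
    (fun x => (T ℝ j₁).eval x * √(1 - x ^ 2)) (fun x => (T ℝ j₂).eval x * √(1 - x ^ 2))
    (fun x => (T ℝ j₃).eval x * √(1 - x ^ 2)) (Set.Icc (-1) 1) (Set.Icc (-1) 1) (Set.Icc (-1) 1)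
  rw [Set.Icc_prod_Icc, Set.Icc_prod_Icc, ← Measure.volume_eq_prod,
    ← Measure.volume_eq_prod] at hfubini
  simp_rw [hsplit, hfubini, integral_chebyshevT_mul_sqrt]
  ring

noncomputable def cubatureNodes (n : ℕ) : Finset (ℤ × ℤ × ℤ) :=
  (Xi3 n).filter fun k => 0 < k.1 ∧ k.1 < (n : ℤ) ∧ 0 < k.2.1 ∧ k.2.1 < (n : ℤ) ∧
    0 < k.2.2 ∧ k.2.2 < (n : ℤ)

lemma cubatureNodes_eq (n : ℕ) :
    cubatureNodes n = (Ioo (0 : ℤ) n ×ˢ Ioo (0 : ℤ) n ×ˢ Ioo (0 : ℤ) n).filter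
      fun k => k.1 % 2 = k.2.1 % 2 ∧ k.2.1 % 2 = k.2.2 % 2 := by
  ext ⟨a, b, c⟩
  simp only [cubatureNodes, Xi3, mem_filter, mem_Icc, mem_product, mem_Ioo, Prod.mk_le_mk]
  omega

noncomputable def cubatureSum (n : ℕ) : (ℝ × ℝ × ℝ → ℝ) →ₗ[ℝ] ℝ where
  toFun f := ∑ k ∈ cubatureNodes n,
    Real.sin (k.1 * π / n) ^ 2 * Real.sin (k.2.1 * π / n) ^ 2 * Real.sin (k.2.2 * π / n) ^ 2 *
      f (Real.cos (k.1 * π / n), Real.cos (k.2.1 * π / n), Real.cos (k.2.2 * π / n))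
  map_add' f g := by simp only [Pi.add_apply, mul_add, sum_add_distrib]
  map_smul' c f := by
    simp only [Pi.smul_apply, smul_eq_mul, RingHom.id_apply, mul_sum]
    exact sum_congr rfl fun _ _ => by ring

lemma cubatureSum_chebyshevT {n : ℕ} (hn : 3 ≤ n) {j₁ j₂ j₃ : ℕ} (h₁₂ : j₁ + j₂ ≤ 2 * n - 5)
    (h₁₃ : j₁ + j₃ ≤ 2 * n - 5) (h₂₃ : j₂ + j₃ ≤ 2 * n - 5) :
    cubatureSum n (fun t => (T ℝ j₁).eval t.1 * (T ℝ j₂).eval t.2.1 * (T ℝ j₃).eval t.2.2) =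
      n ^ 3 * (sinSqCoeff j₁ * sinSqCoeff j₂ * sinSqCoeff j₃) / 4 := by
  set P : ℕ → ℤ → ℝ := fun j a => Real.sin (a * π / n) ^ 2 * (T ℝ j).eval (Real.cos (a * π / n))
    with hP
  have hfactor (k : ℤ × ℤ × ℤ) :
      Real.sin (k.1 * π / n) ^ 2 * Real.sin (k.2.1 * π / n) ^ 2 * Real.sin (k.2.2 * π / n) ^ 2 *
        ((T ℝ j₁).eval (Real.cos (k.1 * π / n)) * (T ℝ j₂).eval (Real.cos (k.2.1 * π / n)) *
          (T ℝ j₃).eval (Real.cos (k.2.2 * π / n))) = P j₁ k.1 * P j₂ k.2.1 * P j₃ k.2.2 := by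
    simp only [hP]; ring
  have htwist (i j : ℕ) (hij : i + j ≤ 2 * n - 5) :
      (∑ a ∈ Ioo (0 : ℤ) n,
        (-1) ^ a * (Real.sin (a * π / n) ^ 2 * (T ℝ i).eval (Real.cos (a * π / n)))) *
      (∑ a ∈ Ioo (0 : ℤ) n,
        (-1) ^ a * (Real.sin (a * π / n) ^ 2 * (T ℝ j).eval (Real.cos (a * π / n)))) = 0 := by
    rcases (by omega : i + 3 ≤ n ∨ j + 3 ≤ n) with h | h <;>
      simp only [sum_neg_one_zpow_mul_sin_sq_mul_chebyshevT h, zero_mul, mul_zero]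
  have hbound (j : ℕ) (hj : j + 3 ≤ 2 * n) : |(j : ℤ)| + 2 < 2 * n := by
    rw [abs_of_nonneg (by omega)]; omega
  simp only [cubatureSum, LinearMap.coe_mk, AddHom.coe_mk, cubatureNodes_eq, hfactor]
  rw [sum_filter_emod_two_eq_mul]
  simp only [hP]
  rw [sum_sin_sq_mul_chebyshevT (hbound j₁ (by omega)),
    sum_sin_sq_mul_chebyshevT (hbound j₂ (by omega)),
    sum_sin_sq_mul_chebyshevT (hbound j₃ (by omega))]
  linear_combination (n * sinSqCoeff j₃ * htwist j₁ j₂ h₁₂ + n * sinSqCoeff j₁ * htwist j₂ j₃ h₂₃ +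
    n * sinSqCoeff j₂ * htwist j₁ j₃ h₁₃) / 4

lemma chebProducts_subset_continuous (N : ℕ) :
    chebProducts N ⊆ continuousSubmodule (ℝ × ℝ × ℝ) ℝ ℝ := by
  rintro _ ⟨j, -, -, -, rfl⟩
  show Continuous _
  fun_prop

theorem cubature_second_kind_3d (n : ℕ) (hn : 3 ≤ n)
    (f : ℝ × ℝ × ℝ → ℝ) (hf : f ∈ Submodule.span ℝ (chebProducts (2 * n - 5))) :
    (1 / Real.pi ^ 3) *
        ∫ t in Set.Icc ((-(1:ℝ), -(1:ℝ), -(1:ℝ))) (((1:ℝ), (1:ℝ), (1:ℝ))),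
          f t * (Real.sqrt (1 - t.1 ^ 2) * Real.sqrt (1 - t.2.1 ^ 2) *
            Real.sqrt (1 - t.2.2 ^ 2))
      = (4 / (n : ℝ) ^ 3) *
          ∑ k ∈ (Xi3 n).filter (fun k => 0 < k.1 ∧ k.1 < (n : ℤ) ∧
              0 < k.2.1 ∧ k.2.1 < (n : ℤ) ∧ 0 < k.2.2 ∧ k.2.2 < (n : ℤ)),
            Real.sin (k.1 * Real.pi / n) ^ 2 * Real.sin (k.2.1 * Real.pi / n) ^ 2 *
              Real.sin (k.2.2 * Real.pi / n) ^ 2 *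
              f (Real.cos (k.1 * Real.pi / n), Real.cos (k.2.1 * Real.pi / n),
                 Real.cos (k.2.2 * Real.pi / n)) := by
  change 1 / π ^ 3 * ∫ t in Set.Icc (-1, -1, -1) (1, 1, 1), f t * chebyshevUWeight t =
    4 / n ^ 3 * cubatureSum n f
  have hintegrable {g : ℝ × ℝ × ℝ → ℝ} (hg : g ∈ Submodule.span ℝ (chebProducts (2 * n - 5))) :
      IntegrableOn (fun t => g t * chebyshevUWeight t) (Set.Icc (-1, -1, -1) (1, 1, 1)) :=
    ((Submodule.span_le.2 (chebProducts_subset_continuous _) hg).mul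
      continuous_chebyshevUWeight).integrableOn_Icc
  induction hf using Submodule.span_induction with
  | mem g hg =>
    obtain ⟨⟨j₁, j₂, j₃⟩, h₁₂, h₁₃, h₂₃, rfl⟩ := hg
    rw [integral_chebyshevT_mul_chebyshevUWeight, cubatureSum_chebyshevT hn h₁₂ h₁₃ h₂₃]
    field_simp
  | zero => simp
  | add g h hg hh ihg ihh =>
    simp only [Pi.add_apply, add_mul, integral_add (hintegrable hg) (hintegrable hh), map_add, mul_add, ihg, ihh]
  | smul c g hg ih =>
    simp only [Pi.smul_apply, smul_eq_mul, mul_assoc, integral_const_mul, map_smul]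
    rw [mul_left_comm, ih, mul_left_comm]
end

section
/- Let n be a positive integer and define Φ_n(x) := (1/(2n³)) · Σ_{ν ∈ Λ_n^†} e_ν(x). Then for every function f : ℝ³ → ℂ and every j ∈ X_n, Σ_{k ∈ X_n} f(k/(2n)) · Φ_n(j/(2n) − k/(2n)) = f(j/(2n)); that is, I_n f(x) := Σ_{k ∈ X_n} f(k/(2n)) Φ_n(x − k/(2n)) interpolates f at every point k/(2n) with k ∈ X_n. -/
open MeasureTheory Complex

attribute [local instance] Classical.propDecidable

/-- Λ_n^† = {k : -n ≤ k_ν ± k_μ < n for all ν < μ}. -/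
noncomputable def LamDag (n : ℕ) : Finset (ℤ × ℤ × ℤ) :=
  (box3 n).filter fun k =>
    (-(n : ℤ) ≤ k.1 + k.2.1 ∧ k.1 + k.2.1 < (n : ℤ)) ∧
    (-(n : ℤ) ≤ k.1 - k.2.1 ∧ k.1 - k.2.1 < (n : ℤ)) ∧
    (-(n : ℤ) ≤ k.1 + k.2.2 ∧ k.1 + k.2.2 < (n : ℤ)) ∧
    (-(n : ℤ) ≤ k.1 - k.2.2 ∧ k.1 - k.2.2 < (n : ℤ)) ∧
    (-(n : ℤ) ≤ k.2.1 + k.2.2 ∧ k.2.1 + k.2.2 < (n : ℤ)) ∧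
    (-(n : ℤ) ≤ k.2.1 - k.2.2 ∧ k.2.1 - k.2.2 < (n : ℤ))

/-- Φ_n(x) = (1/(2n³)) Σ_{ν ∈ Λ_n^†} e_ν(x). -/
noncomputable def Phi3 (n : ℕ) (x : ℝ × ℝ × ℝ) : ℂ :=
  (1 / (2 * (n : ℂ) ^ 3)) * ∑ ν ∈ LamDag n, e3 ν x

/-!
`Λ_n^†` is the set of integer points of a half-open rhombic dodecahedron, the Voronoi cell of the
lattice `n • D₃`, where `D₃ = {x ∈ ℤ³ | x₁ + x₂ + x₃ even}`. Hence it is a complete set of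
representatives of `ℤ³ ⧸ n • D₃ ≃ ℤ/n × ℤ/n × ℤ/2n`: every coset meets it in a point of least
(slightly perturbed) norm, and two points of the cell differ by less than a lattice step.
For `j, k ∈ X_n` the coordinates of `m = j - k` have equal parity, so with `ζ = exp (π i / n)` the
map `ν ↦ e_ν ((j - k) / 2n) = ζ ^ (ν ⬝ m)` factors through that quotient. The sum over `Λ_n^†`
therefore splits into three geometric sums over roots of unity, which vanish unless `m = 0`.
-/

open Finset

/-- Identifies `ℤ³ ⧸ n • D₃` with `ℤ/n × ℤ/n × ℤ/2n`. -/
def cosetIndex (n : ℕ) (v : ℤ × ℤ × ℤ) : ℤ × ℤ × ℤ :=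
  (v.1 % n, v.2.1 % n, (v.1 + v.2.1 + v.2.2) % (2 * n))

noncomputable def cosetBox (n : ℕ) : Finset (ℤ × ℤ × ℤ) :=
  Ico 0 (n : ℤ) ×ˢ Ico 0 (n : ℤ) ×ˢ Ico 0 (2 * n : ℤ)

lemma cosetIndex_mem_cosetBox {n : ℕ} (hn : 0 < n) (v : ℤ × ℤ × ℤ) :
    cosetIndex n v ∈ cosetBox n := by
  simp only [cosetIndex, cosetBox, mem_product, mem_Ico]
  refine ⟨⟨Int.emod_nonneg _ ?_, Int.emod_lt_of_pos _ ?_⟩,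
    ⟨Int.emod_nonneg _ ?_, Int.emod_lt_of_pos _ ?_⟩,
    ⟨Int.emod_nonneg _ ?_, Int.emod_lt_of_pos _ ?_⟩⟩ <;> omega

lemma cosetIndex_add_smul (n : ℕ) (v d : ℤ × ℤ × ℤ) (hd : 2 ∣ d.1 + d.2.1 + d.2.2) :
    cosetIndex n (v + (n : ℤ) • d) = cosetIndex n v := by
  obtain ⟨e, he⟩ := hd
  have hsum : v.1 + n * d.1 + (v.2.1 + n * d.2.1) + (v.2.2 + n * d.2.2) =
      v.1 + v.2.1 + v.2.2 + 2 * n * e := by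
    linear_combination (n : ℤ) * he
  simp [cosetIndex, hsum, Int.add_mul_emod_self_left]

lemma injOn_cosetIndex_LamDag {n : ℕ} (hn : 0 < n) : Set.InjOn (cosetIndex n) (LamDag n) := by
  intro v hv w hw h
  simp only [LamDag, coe_filter, Set.mem_ofPred_eq] at hv hw
  simp only [cosetIndex, Prod.mk.injEq] at h
  obtain ⟨p, hp⟩ := Int.ModEq.dvd h.1
  obtain ⟨q, hq⟩ := Int.ModEq.dvd h.2.1
  obtain ⟨r, hr⟩ := Int.ModEq.dvd h.2.2
  obtain ⟨s, hs, hpqs⟩ : ∃ s, w.2.2 - v.2.2 = n * s ∧ p + q + s = 2 * r :=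
    ⟨2 * r - p - q, by linear_combination hr - hp - hq, by ring⟩
  -- `w - v = n • (p, q, s)` with `p + q + s` even, while `Λ_n^†` is narrower than `2n` in each
  -- direction `eᵢ ± eⱼ`
  have hn' : (0 : ℤ) < n := by exact_mod_cast hn
  have small : ∀ y : ℤ, -(2 * n) < n * y → n * y < 2 * n → -1 ≤ y ∧ y ≤ 1 :=
    fun y h₁ h₂ => ⟨by nlinarith, by nlinarith⟩
  have := small (p + q) (by linarith) (by linarith)
  have := small (p - q) (by linarith) (by linarith)
  have := small (p + s) (by linarith) (by linarith)
  have := small (p - s) (by linarith) (by linarith)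
  have := small (q + s) (by linarith) (by linarith)
  have := small (q - s) (by linarith) (by linarith)
  obtain ⟨rfl, rfl, rfl⟩ : p = 0 ∧ q = 0 ∧ s = 0 := by
    rcases Int.emod_two_eq_zero_or_one p with h | h <;> omega
  simp only [mul_zero, sub_eq_zero] at hp hq hs
  exact Prod.ext hp.symm (Prod.ext hq.symm hs.symm)

/-- The squared distance from `6 v` to `-(3, 2, 1)`; the small generic offset breaks ties between
lattice translates in favour of the closed faces of `Λ_n^†`. -/
def voronoiCost (v : ℤ × ℤ × ℤ) : ℤ :=
  (6 * v.1 + 3) ^ 2 + (6 * v.2.1 + 2) ^ 2 + (6 * v.2.2 + 1) ^ 2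

lemma voronoiCost_nonneg (v : ℤ × ℤ × ℤ) : 0 ≤ voronoiCost v := by
  unfold voronoiCost; positivity

lemma voronoiCost_add_smul (n : ℤ) (v d : ℤ × ℤ × ℤ) :
    voronoiCost (v + n • d) = voronoiCost v + 12 * n * (6 * (d.1 * v.1 + d.2.1 * v.2.1 +
      d.2.2 * v.2.2) + (3 * d.1 + 2 * d.2.1 + d.2.2) + 3 * n * (d.1 ^ 2 + d.2.1 ^ 2 + d.2.2 ^ 2)) := by
  simp only [voronoiCost, Prod.fst_add, Prod.snd_add, Prod.smul_fst, Prod.smul_snd, smul_eq_mul]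
  ring

lemma surjOn_cosetIndex_LamDag {n : ℕ} (hn : 0 < n) :
    Set.SurjOn (cosetIndex n) (LamDag n) (cosetBox n) := by
  intro t ht
  simp only [cosetBox, coe_product, Set.mem_prod, coe_Ico, Set.mem_Ico] at ht
  have hfiber : cosetIndex n (t.1, t.2.1, t.2.2 - t.1 - t.2.1) = t := by
    simp only [cosetIndex, Prod.ext_iff, show t.1 + t.2.1 + (t.2.2 - t.1 - t.2.1) = t.2.2 by ring]
    exact ⟨Int.emod_eq_of_lt ht.1.1 ht.1.2, Int.emod_eq_of_lt ht.2.1.1 ht.2.1.2,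
      Int.emod_eq_of_lt ht.2.2.1 ht.2.2.2⟩
  obtain ⟨_, ⟨v, hv, rfl⟩, hmin⟩ := Int.exists_least_of_bdd
    (P := fun c => ∃ v, cosetIndex n v = t ∧ voronoiCost v = c)
    ⟨0, by rintro _ ⟨v, -, rfl⟩; exact voronoiCost_nonneg v⟩ ⟨_, _, hfiber, rfl⟩
  have hn' : (0 : ℤ) < n := by exact_mod_cast hn
  have key : ∀ a b c : ℤ, 2 ∣ a + b + c → a ^ 2 + b ^ 2 + c ^ 2 = 2 →
      0 ≤ 6 * (a * v.1 + b * v.2.1 + c * v.2.2) + (3 * a + 2 * b + c) + 6 * n := by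
    intro a b c hd hd2
    have hle := hmin _ ⟨v + (n : ℤ) • (a, b, c), by rw [cosetIndex_add_smul _ _ _ hd, hv], rfl⟩
    rw [voronoiCost_add_smul, le_add_iff_nonneg_right] at hle
    simp only [hd2] at hle
    linarith [nonneg_of_mul_nonneg_right hle (by positivity)]
  have := key 1 1 0 (by norm_num) (by norm_num)
  have := key (-1) (-1) 0 (by norm_num) (by norm_num)
  have := key 1 (-1) 0 (by norm_num) (by norm_num)
  have := key (-1) 1 0 (by norm_num) (by norm_num)
  have := key 1 0 1 (by norm_num) (by norm_num)
  have := key (-1) 0 (-1) (by norm_num) (by norm_num)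
  have := key 1 0 (-1) (by norm_num) (by norm_num)
  have := key (-1) 0 1 (by norm_num) (by norm_num)
  have := key 0 1 1 (by norm_num) (by norm_num)
  have := key 0 (-1) (-1) (by norm_num) (by norm_num)
  have := key 0 1 (-1) (by norm_num) (by norm_num)
  have := key 0 (-1) 1 (by norm_num) (by norm_num)
  refine ⟨v, mem_filter.2 ⟨?_, ?_⟩, hv⟩
  · simp only [box3, mem_Icc, Prod.le_def]
    omega
  · omega

lemma bijOn_cosetIndex_LamDag {n : ℕ} (hn : 0 < n) :
    Set.BijOn (cosetIndex n) (LamDag n) (cosetBox n) :=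
  ⟨fun v _ => cosetIndex_mem_cosetBox hn v, injOn_cosetIndex_LamDag hn,
    surjOn_cosetIndex_LamDag hn⟩

lemma sum_Ico_zpow_eq_zero {K : Type*} [DivisionRing K] {α : K} {N : ℕ} (h : α ^ N = 1) (hα : α ≠ 1) :
    ∑ x ∈ Ico (0 : ℤ) N, α ^ x = 0 := by
  rw [Int.Ico_eq_finset_map]
  simp [geom_sum_eq hα, h]

lemma sum_LamDag_zpow {K : Type*} [Field K] {n : ℕ} (hn : 0 < n) {ζ : K} (hζ : ζ ^ (2 * n) = 1)
    {m : ℤ × ℤ × ℤ} (h₁ : 2 ∣ m.1 - m.2.2) (h₂ : 2 ∣ m.2.1 - m.2.2) :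
    ∑ ν ∈ LamDag n, ζ ^ (ν.1 * m.1 + ν.2.1 * m.2.1 + ν.2.2 * m.2.2) =
      (∑ a ∈ Ico (0 : ℤ) n, (ζ ^ (m.1 - m.2.2)) ^ a) *
        ((∑ b ∈ Ico (0 : ℤ) n, (ζ ^ (m.2.1 - m.2.2)) ^ b) *
          ∑ c ∈ Ico (0 : ℤ) (2 * n), (ζ ^ m.2.2) ^ c) := by
  have hζ0 : ζ ≠ 0 := by rintro rfl; simp [hn.ne'] at hζ
  simp only [sum_mul_sum, ← sum_product']
  obtain ⟨e₁, he₁⟩ := h₁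
  obtain ⟨e₂, he₂⟩ := h₂
  refine sum_nbij (cosetIndex n) (bijOn_cosetIndex_LamDag hn).mapsTo
    (bijOn_cosetIndex_LamDag hn).injOn (bijOn_cosetIndex_LamDag hn).surjOn fun ν _ => ?_
  -- `ν ⬝ m = (m₁ - m₃) ν₁ + (m₂ - m₃) ν₂ + m₃ (ν₁ + ν₂ + ν₃)` with `m₁ - m₃`, `m₂ - m₃` even, so
  -- modulo `2n` it only depends on `cosetIndex n ν`
  have hexp : ν.1 * m.1 + ν.2.1 * m.2.1 + ν.2.2 * m.2.2 =
      (m.1 - m.2.2) * (ν.1 % n) + ((m.2.1 - m.2.2) * (ν.2.1 % n) +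
        m.2.2 * ((ν.1 + ν.2.1 + ν.2.2) % (2 * n))) +
      2 * n * (e₁ * (ν.1 / n) + e₂ * (ν.2.1 / n) + m.2.2 * ((ν.1 + ν.2.1 + ν.2.2) / (2 * n))) := by
    linear_combination n * (ν.1 / n) * he₁ + n * (ν.2.1 / n) * he₂ -
      (m.1 - m.2.2) * Int.emod_add_mul_ediv ν.1 n -
      (m.2.1 - m.2.2) * Int.emod_add_mul_ediv ν.2.1 n -
      m.2.2 * Int.emod_add_mul_ediv (ν.1 + ν.2.1 + ν.2.2) (2 * n)
  have hζ2n : ζ ^ (2 * n : ℤ) = 1 := by exact_mod_cast hζ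
  rw [hexp, zpow_add₀ hζ0, zpow_mul ζ (2 * n), hζ2n, one_zpow, mul_one, zpow_add₀ hζ0,
    zpow_add₀ hζ0, zpow_mul, zpow_mul, zpow_mul]
  rfl

lemma e3_pt3_sub (n : ℕ) (ν j k : ℤ × ℤ × ℤ) :
    e3 ν (pt3 n j - pt3 n k) = exp (2 * Real.pi * I / (2 * n : ℕ)) ^
      (ν.1 * (j - k).1 + ν.2.1 * (j - k).2.1 + ν.2.2 * (j - k).2.2) := by
  rw [← exp_int_mul, e3]
  congr 1
  simp only [pt3, Prod.fst_sub, Prod.snd_sub]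
  push_cast
  field_simp

lemma pos_of_mem_X3 {n : ℕ} {j : ℤ × ℤ × ℤ} (hj : j ∈ X3 n) : 0 < n := by
  simp only [X3, box3, mem_filter, mem_Icc, Prod.le_def] at hj
  omega

lemma two_dvd_sub_of_mem_X3 {n : ℕ} {j k : ℤ × ℤ × ℤ} (hj : j ∈ X3 n) (hk : k ∈ X3 n) :
    2 ∣ (j - k).1 - (j - k).2.2 ∧ 2 ∣ (j - k).2.1 - (j - k).2.2 := by
  simp only [X3, mem_filter, Prod.fst_sub, Prod.snd_sub] at hj hk ⊢
  omega

lemma eq_of_mem_X3_of_dvd {n : ℕ} {j k : ℤ × ℤ × ℤ} (hj : j ∈ X3 n) (hk : k ∈ X3 n)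
    (h₁ : 2 * (n : ℤ) ∣ (j - k).1) (h₂ : 2 * (n : ℤ) ∣ (j - k).2.1)
    (h₃ : 2 * (n : ℤ) ∣ (j - k).2.2) : j = k := by
  simp only [X3, box3, mem_filter, mem_Icc, Prod.le_def] at hj hk
  have small (x : ℤ) (hx : 2 * (n : ℤ) ∣ x) (hlo : -(2 * n) < x) (hhi : x < 2 * n) : x = 0 :=
    Int.eq_zero_of_abs_lt_dvd hx (abs_lt.2 ⟨hlo, hhi⟩)
  simp only [Prod.fst_sub, Prod.snd_sub] at h₁ h₂ h₃
  have := small _ h₁ (by omega) (by omega)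
  have := small _ h₂ (by omega) (by omega)
  have := small _ h₃ (by omega) (by omega)
  exact Prod.ext (by omega) (Prod.ext (by omega) (by omega))

lemma Phi3_pt3_sub {n : ℕ} {j k : ℤ × ℤ × ℤ} (hj : j ∈ X3 n) (hk : k ∈ X3 n) :
    Phi3 n (pt3 n j - pt3 n k) = if j = k then 1 else 0 := by
  have hn := pos_of_mem_X3 hj
  obtain ⟨h₁, h₂⟩ := two_dvd_sub_of_mem_X3 hj hk
  set ζ := exp (2 * Real.pi * I / (2 * n : ℕ))
  have hζ : IsPrimitiveRoot ζ (2 * n) := isPrimitiveRoot_exp _ (by omega)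
  have root (a : ℤ) (N : ℕ) (h : 2 * (n : ℤ) ∣ a * N) : (ζ ^ a) ^ N = 1 := by
    rw [← zpow_natCast, ← zpow_mul, hζ.zpow_eq_one_iff_dvd]
    exact_mod_cast h
  rw [Phi3, sum_congr rfl fun ν _ => e3_pt3_sub n ν j k, sum_LamDag_zpow hn hζ.pow_eq_one h₁ h₂]
  split_ifs with hjk
  · subst hjk
    have : (n : ℂ) ≠ 0 := by exact_mod_cast hn.ne'
    simp [show (2 * (n : ℤ)).toNat = 2 * n by omega]
    field_simp
  · obtain h | h | h : ζ ^ ((j - k).1 - (j - k).2.2) ≠ 1 ∨ ζ ^ ((j - k).2.1 - (j - k).2.2) ≠ 1 ∨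
        ζ ^ (j - k).2.2 ≠ 1 := by
      by_contra! h
      simp only [hζ.zpow_eq_one_iff_dvd] at h
      push_cast at h
      exact hjk (eq_of_mem_X3_of_dvd hj hk (by simpa using dvd_add h.1 h.2.2)
        (by simpa using dvd_add h.2.1 h.2.2) h.2.2)
    · rw [sum_Ico_zpow_eq_zero (root _ _ (mul_dvd_mul_right h₁ _)) h]
      simp
    · rw [sum_Ico_zpow_eq_zero (root _ _ (mul_dvd_mul_right h₂ _)) h]
      simp
    · rw [show 2 * (n : ℤ) = (2 * n : ℕ) by push_cast; rfl,
        sum_Ico_zpow_eq_zero (root _ _ (dvd_mul_left _ _)) h]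
      simp

theorem trig_interpolation_3d_general (n : ℕ) (f : ℝ × ℝ × ℝ → ℂ)
    (j : ℤ × ℤ × ℤ) (hj : j ∈ X3 n) :
    ∑ k ∈ X3 n, f (pt3 n k) * Phi3 n (pt3 n j - pt3 n k) = f (pt3 n j) := by
  rw [sum_congr rfl fun k hk => by rw [Phi3_pt3_sub hj hk]]
  simp [hj]

theorem trig_interpolation_3d (n : ℕ) (hn : 0 < n) (f : ℝ × ℝ × ℝ → ℂ)
    (j : ℤ × ℤ × ℤ) (hj : j ∈ X3 n) :
    ∑ k ∈ X3 n, f (pt3 n k) * Phi3 n (pt3 n j - pt3 n k) = f (pt3 n j) :=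
  trig_interpolation_3d_general n f j hj
end

section
/- Let n be a positive integer and let f : ℝ³ → ℂ. Define I_n^* f(x) := Σ_{k ∈ X_n^*} f(k/(2n)) · Φ_n^*(x − k/(2n)). Then for every j ∈ X_n^*: if |j_i| < n for all i = 1,2,3, then I_n^* f(j/(2n)) = f(j/(2n)); otherwise I_n^* f(j/(2n)) = Σ_{k ∈ S_j} f(k/(2n)), where S_j := {k ∈ X_n^* : k − j ∈ 2nℤ³}. -/
open MeasureTheory Complex

attribute [local instance] Classical.propDecidable

/-- Congruence modulo the face-centered cubic lattice Bℤ³. -/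
def fccCong (n : ℕ) (μ ν : ℤ × ℤ × ℤ) : Prop :=
  ∃ m : ℤ × ℤ × ℤ, Even (m.1 + m.2.1 + m.2.2) ∧
    μ.1 - ν.1 = (n : ℤ) * m.1 ∧ μ.2.1 - ν.2.1 = (n : ℤ) * m.2.1 ∧
    μ.2.2 - ν.2.2 = (n : ℤ) * m.2.2

/-- μ_ν = 1 / #{μ ∈ Λ_n^{†*} : μ ≡ ν mod Bℤ³}. -/
noncomputable def mu3 (n : ℕ) (ν : ℤ × ℤ × ℤ) : ℝ :=
  1 / (((LamDagStar n).filter (fun μ => fccCong n μ ν)).card : ℝ)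

/-- Φ_n^*(x) = (1/(2n³)) Σ_{ν ∈ Λ_n^{†*}} μ_ν e_ν(x). -/
noncomputable def Phi3star (n : ℕ) (x : ℝ × ℝ × ℝ) : ℂ :=
  (1 / (2 * (n : ℂ) ^ 3)) * ∑ ν ∈ LamDagStar n, (mu3 n ν : ℂ) * e3 ν x

/-- I_n^* f(x) = Σ_{k ∈ X_n^*} f(k/(2n)) Φ_n^*(x - k/(2n)). -/
noncomputable def Istar3 (n : ℕ) (f : ℝ × ℝ × ℝ → ℂ) (x : ℝ × ℝ × ℝ) : ℂ :=
  ∑ k ∈ X3star n, f (pt3 n k) * Phi3star n (x - pt3 n k)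

/-!
Identify `ℤ³ / Bℤ³` with `ZMod (2n) × ZMod n × ZMod n` through `v ↦ (v₁ + v₂ + v₃, v₂, v₃)`.
`Λ_n^{†*}` is the Voronoi cell of `Bℤ³`, so it meets every class, and the weights `μ_ν` turn
`Σ_{ν ∈ Λ} μ_ν g ν` into the sum of `g` over the classes whenever `g` is `Bℤ³`-periodic. For `j, k`
in `X_n^*` the coordinates of `d = j - k` have equal parity, so `ν ↦ e_ν(d/(2n))` is such a `g`,
namely a character of that finite group, and orthogonality of characters gives
`Φ_n^*(d/(2n)) = 1` if `d ∈ 2nℤ³` and `0` otherwise. Inside the open cube the only `k ≡ j` is `j`.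
-/

open Finset

theorem Finset.sum_inv_card_fiber_mul {α β K : Type*} [Fintype β] [DecidableEq β]
    [DivisionSemiring K] [CharZero K] {s : Finset α} {π : α → β} (hπ : ∀ b, ∃ a ∈ s, π a = b)
    (g : β → K) : ∑ a ∈ s, (#{x ∈ s | π x = π a} : K)⁻¹ * g (π a) = ∑ b, g b := by
  rw [← sum_fiberwise s π]
  refine sum_congr rfl fun b _ => ?_
  have hcard : (#{x ∈ s | π x = b} : K) ≠ 0 := by
    obtain ⟨a, ha, rfl⟩ := hπ b
    exact Nat.cast_ne_zero.2 (card_ne_zero_of_mem (mem_filter.2 ⟨ha, rfl⟩))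
  rw [sum_congr rfl fun a ha => by rw [(mem_filter.1 ha).2], sum_const, nsmul_eq_mul,
    ← mul_assoc, mul_inv_cancel₀ hcard, one_mul]

open ZMod in
theorem sum_stdAddChar_mul_prod {N₁ N₂ N₃ : ℕ} [NeZero N₁] [NeZero N₂] [NeZero N₃]
    (p : ZMod N₁) (q : ZMod N₂) (r : ZMod N₃) :
    ∑ c : ZMod N₁ × ZMod N₂ × ZMod N₃,
        stdAddChar (c.1 * p) * stdAddChar (c.2.1 * q) * stdAddChar (c.2.2 * r)
      = if p = 0 ∧ q = 0 ∧ r = 0 then (N₁ * N₂ * N₃ : ℂ) else 0 := by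
  simp only [Fintype.sum_prod_type, ← mul_sum, ← sum_mul,
    AddChar.sum_mulShift _ (isPrimitive_stdAddChar _), ZMod.card]
  split_ifs <;> simp_all

def fccClass (n : ℕ) (v : ℤ × ℤ × ℤ) : ZMod (2 * n) × ZMod n × ZMod n :=
  (((v.1 + v.2.1 + v.2.2 : ℤ) : ZMod (2 * n)), (v.2.1 : ZMod n), (v.2.2 : ZMod n))

theorem fccCong_iff_fccClass_eq (n : ℕ) (a b : ℤ × ℤ × ℤ) :
    fccCong n a b ↔ fccClass n a = fccClass n b := by
  simp only [fccClass, Prod.ext_iff, ZMod.intCast_eq_intCast_iff_dvd_sub, Nat.cast_mul,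
    Nat.cast_ofNat]
  constructor
  · rintro ⟨m, ⟨k, hk⟩, h₁, h₂, h₃⟩
    exact ⟨⟨-k, by linear_combination -h₁ - h₂ - h₃ - n * hk⟩, ⟨-m.2.1, by linear_combination -h₂⟩,
      ⟨-m.2.2, by linear_combination -h₃⟩⟩
  · rintro ⟨⟨k, hk⟩, ⟨m₂, h₂⟩, ⟨m₃, h₃⟩⟩
    exact ⟨(m₂ + m₃ - 2 * k, -m₂, -m₃), ⟨-k, by ring⟩,
      by linear_combination -hk + h₂ + h₃, by linear_combination -h₂, by linear_combination -h₃⟩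

theorem fccClass_surjective (n : ℕ) : Function.Surjective (fccClass n) := by
  rintro ⟨s, y, z⟩
  obtain ⟨s, rfl⟩ := ZMod.intCast_surjective s
  obtain ⟨y, rfl⟩ := ZMod.intCast_surjective y
  obtain ⟨z, rfl⟩ := ZMod.intCast_surjective z
  exact ⟨(s - y - z, y, z), by simp only [fccClass, show s - y - z + y + z = s by ring]⟩

theorem fccClass_sub_smul (n : ℕ) (v : ℤ × ℤ × ℤ) {u : ℤ × ℤ × ℤ}
    (hu : Even (u.1 + u.2.1 + u.2.2)) : fccClass n (v - (n : ℤ) • u) = fccClass n v :=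
  (fccCong_iff_fccClass_eq n _ _).1
    ⟨-u, by simpa only [Prod.fst_neg, Prod.snd_neg, ← neg_add, even_neg] using hu,
      by simp only [Prod.fst_sub, Prod.smul_fst, Prod.fst_neg, smul_eq_mul]; ring,
      by simp only [Prod.snd_sub, Prod.fst_sub, Prod.smul_snd, Prod.smul_fst, Prod.snd_neg,
        Prod.fst_neg, smul_eq_mul]; ring,
      by simp only [Prod.snd_sub, Prod.smul_snd, Prod.snd_neg, smul_eq_mul]; ring⟩

def dot3 (a b : ℤ × ℤ × ℤ) : ℤ := a.1 * b.1 + a.2.1 * b.2.1 + a.2.2 * b.2.2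

theorem dot3_self_nonneg (v : ℤ × ℤ × ℤ) : 0 ≤ dot3 v v := by
  unfold dot3
  nlinarith [mul_self_nonneg v.1, mul_self_nonneg v.2.1, mul_self_nonneg v.2.2]

def fccRoots : Finset (ℤ × ℤ × ℤ) :=
  {(1, 1, 0), (1, -1, 0), (-1, 1, 0), (-1, -1, 0), (1, 0, 1), (1, 0, -1), (-1, 0, 1),
    (-1, 0, -1), (0, 1, 1), (0, 1, -1), (0, -1, 1), (0, -1, -1)}

theorem dot3_self_and_even_of_mem_fccRoots :
    ∀ u ∈ fccRoots, dot3 u u = 2 ∧ Even (u.1 + u.2.1 + u.2.2) := by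
  decide

theorem mem_LamDagStar_iff {n : ℕ} {k : ℤ × ℤ × ℤ} :
    k ∈ LamDagStar n ↔ ∀ u ∈ fccRoots, dot3 k u ≤ n := by
  simp only [LamDagStar, box3, fccRoots, dot3, mem_filter, mem_Icc, Prod.le_def, abs_le,
    mem_insert, mem_singleton, forall_eq_or_imp, forall_eq]
  omega

theorem dot3_sub_smul_lt {m : ℤ} (hm : 0 < m) {v u : ℤ × ℤ × ℤ} (hu : dot3 u u = 2)
    (hvu : m < dot3 v u) : dot3 (v - m • u) (v - m • u) < dot3 v v := by
  have hexp : dot3 (v - m • u) (v - m • u) = dot3 v v - 2 * m * dot3 v u + m ^ 2 * dot3 u u := by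
    simp only [dot3, Prod.fst_sub, Prod.snd_sub, Prod.smul_fst, Prod.smul_snd, smul_eq_mul]
    ring
  rw [hexp, hu]
  nlinarith

/-- A vector `ν` of least norm in its class lies in `Λ_n^{†*}`: if `⟨ν, u⟩ > n` for a root `u`,
then `ν - n • u` is a shorter vector of the same class. -/
theorem exists_mem_LamDagStar_fccClass_eq {n : ℕ} (hn : 0 < n)
    (c : ZMod (2 * n) × ZMod n × ZMod n) : ∃ ν ∈ LamDagStar n, fccClass n ν = c := by
  obtain ⟨ν, hν, hmin⟩ := (measure fun w => (dot3 w w).toNat).wf.has_min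
    {w | fccClass n w = c} (fccClass_surjective n c)
  refine ⟨ν, mem_LamDagStar_iff.2 fun u hu => not_lt.1 fun hlt => ?_, hν⟩
  obtain ⟨hu2, hueven⟩ := dot3_self_and_even_of_mem_fccRoots u hu
  have hlt' := dot3_sub_smul_lt (by exact_mod_cast hn) hu2 hlt
  have hnonneg := dot3_self_nonneg (ν - (n : ℤ) • u)
  exact hmin (ν - (n : ℤ) • u) ((fccClass_sub_smul n ν hueven).trans hν) (by
    show (dot3 _ _).toNat < (dot3 ν ν).toNat
    omega)

theorem ofReal_mu3 (n : ℕ) (ν : ℤ × ℤ × ℤ) :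
    (mu3 n ν : ℂ) = (#{μ ∈ LamDagStar n | fccClass n μ = fccClass n ν} : ℂ)⁻¹ := by
  simp only [mu3, fccCong_iff_fccClass_eq, one_div, Complex.ofReal_inv, Complex.ofReal_natCast]

open ZMod in
theorem e3_pt3_eq_stdAddChar {n : ℕ} [NeZero n] (ν : ℤ × ℤ × ℤ) (t a b : ℤ) :
    e3 ν (pt3 n (t, t + 2 * a, t + 2 * b))
      = stdAddChar ((fccClass n ν).1 * (t : ZMod (2 * n)))
        * stdAddChar ((fccClass n ν).2.1 * (a : ZMod n))
        * stdAddChar ((fccClass n ν).2.2 * (b : ZMod n)) := by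
  have hn : (n : ℂ) ≠ 0 := NeZero.ne _
  simp only [fccClass, ← Int.cast_mul, stdAddChar_coe, e3, pt3, ← Complex.exp_add]
  congr 1
  push_cast
  field_simp
  ring

theorem dvd_add_two_mul_iff {m t a : ℤ} (ht : 2 * m ∣ t) : 2 * m ∣ t + 2 * a ↔ m ∣ a :=
  (dvd_add_right ht).trans (mul_dvd_mul_iff_left two_ne_zero)

theorem Phi3star_pt3 {n : ℕ} [NeZero n] (d : ℤ × ℤ × ℤ) (hd₂ : 2 ∣ d.2.1 - d.1)
    (hd₃ : 2 ∣ d.2.2 - d.1) :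
    Phi3star n (pt3 n d)
      = if 2 * (n : ℤ) ∣ d.1 ∧ 2 * (n : ℤ) ∣ d.2.1 ∧ 2 * (n : ℤ) ∣ d.2.2 then 1 else 0 := by
  obtain ⟨t, d₂, d₃⟩ := d
  obtain ⟨a, ha⟩ := hd₂
  obtain ⟨b, hb⟩ := hd₃
  obtain rfl : d₂ = t + 2 * a := eq_add_of_sub_eq' ha
  obtain rfl : d₃ = t + 2 * b := eq_add_of_sub_eq' hb
  simp only [Phi3star, e3_pt3_eq_stdAddChar, ofReal_mu3]
  rw [sum_inv_card_fiber_mul (exists_mem_LamDagStar_fccClass_eq (NeZero.pos n))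
    fun c : ZMod (2 * n) × ZMod n × ZMod n =>
      ZMod.stdAddChar (c.1 * (t : ZMod (2 * n))) * ZMod.stdAddChar (c.2.1 * (a : ZMod n))
        * ZMod.stdAddChar (c.2.2 * (b : ZMod n)), sum_stdAddChar_mul_prod]
  have hn : (n : ℂ) ≠ 0 := NeZero.ne _
  have hcond : (2 * (n : ℤ) ∣ t ∧ (n : ℤ) ∣ a ∧ (n : ℤ) ∣ b)
      ↔ (2 * (n : ℤ) ∣ t ∧ 2 * (n : ℤ) ∣ t + 2 * a ∧ 2 * (n : ℤ) ∣ t + 2 * b) :=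
    and_congr_right fun ht => by rw [dvd_add_two_mul_iff ht, dvd_add_two_mul_iff ht]
  simp only [ZMod.intCast_zmod_eq_zero_iff_dvd, Nat.cast_mul, Nat.cast_ofNat,
    if_congr hcond rfl rfl]
  split_ifs
  · field_simp
  · simp

theorem mem_X3star {n : ℕ} {k : ℤ × ℤ × ℤ} :
    k ∈ X3star n ↔ (|k.1| ≤ n ∧ |k.2.1| ≤ n ∧ |k.2.2| ≤ n) ∧
      k.1 % 2 = k.2.1 % 2 ∧ k.2.1 % 2 = k.2.2 % 2 := by
  simp only [X3star, box3, mem_filter, mem_Icc, Prod.le_def, abs_le]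
  omega

theorem pt3_sub (n : ℕ) (j k : ℤ × ℤ × ℤ) : pt3 n j - pt3 n k = pt3 n (j - k) := by
  simp only [pt3, Prod.mk_sub_mk, Prod.fst_sub, Prod.snd_sub, Int.cast_sub, sub_div]

theorem Istar3_pt3 {n : ℕ} [NeZero n] (f : ℝ × ℝ × ℝ → ℂ) {j : ℤ × ℤ × ℤ}
    (hj : j ∈ X3star n) :
    Istar3 n f (pt3 n j)
      = ∑ k ∈ X3star n with (2 * (n : ℤ) ∣ k.1 - j.1 ∧ 2 * (n : ℤ) ∣ k.2.1 - j.2.1 ∧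
          2 * (n : ℤ) ∣ k.2.2 - j.2.2), f (pt3 n k) := by
  rw [Istar3, sum_filter]
  refine sum_congr rfl fun k hk => ?_
  have hj_parity := (mem_X3star.1 hj).2
  have hk_parity := (mem_X3star.1 hk).2
  rw [pt3_sub, Phi3star_pt3 (j - k) (by simp only [Prod.fst_sub, Prod.snd_sub]; omega)
    (by simp only [Prod.fst_sub, Prod.snd_sub]; omega)]
  simp only [Prod.fst_sub, Prod.snd_sub, mul_ite, mul_one, mul_zero]
  refine if_congr ?_ rfl rfl
  simp only [dvd_sub_comm]

theorem eq_of_two_mul_dvd_sub {n j k : ℤ} (hj : |j| < n) (hk : |k| ≤ n) (h : 2 * n ∣ k - j) :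
    k = j := by
  refine sub_eq_zero.1 (Int.eq_zero_of_abs_lt_dvd h ?_)
  rw [abs_lt] at hj ⊢
  rw [abs_le] at hk
  omega

theorem symmetric_trig_interpolation_3d (n : ℕ) (hn : 0 < n) (f : ℝ × ℝ × ℝ → ℂ)
    (j : ℤ × ℤ × ℤ) (hj : j ∈ X3star n) :
    (|j.1| < (n : ℤ) ∧ |j.2.1| < (n : ℤ) ∧ |j.2.2| < (n : ℤ) →
      Istar3 n f (pt3 n j) = f (pt3 n j)) ∧
    (¬ (|j.1| < (n : ℤ) ∧ |j.2.1| < (n : ℤ) ∧ |j.2.2| < (n : ℤ)) →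
      Istar3 n f (pt3 n j)
        = ∑ k ∈ (X3star n).filter (fun k => (2 * (n : ℤ)) ∣ k.1 - j.1 ∧
            (2 * (n : ℤ)) ∣ k.2.1 - j.2.1 ∧ (2 * (n : ℤ)) ∣ k.2.2 - j.2.2),
          f (pt3 n k)) := by
  have : NeZero n := ⟨hn.ne'⟩
  refine ⟨fun ⟨hj₁, hj₂, hj₃⟩ => ?_, fun _ => Istar3_pt3 f hj⟩
  suffices hS : (X3star n).filter (fun k => (2 * (n : ℤ)) ∣ k.1 - j.1 ∧
      (2 * (n : ℤ)) ∣ k.2.1 - j.2.1 ∧ (2 * (n : ℤ)) ∣ k.2.2 - j.2.2) = {j} by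
    rw [Istar3_pt3 f hj, hS, sum_singleton]
  refine eq_singleton_iff_unique_mem.2 ⟨mem_filter.2 ⟨hj, by simp⟩, fun k hk => ?_⟩
  obtain ⟨hkX, h₁, h₂, h₃⟩ := mem_filter.1 hk
  obtain ⟨⟨hk₁, hk₂, hk₃⟩, -⟩ := mem_X3star.1 hkX
  exact Prod.ext (eq_of_two_mul_dvd_sub hj₁ hk₁ h₁)
    (Prod.ext (eq_of_two_mul_dvd_sub hj₂ hk₂ h₂) (eq_of_two_mul_dvd_sub hj₃ hk₃ h₃))
end
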